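/- arXiv:2407.02677 — 8 statements merged into one kernel-verified Lean document; each statement's English description precedes it below -/
import Mathlib

section
/- Let A be a complex unital Banach algebra, let N ≥ 1, and let X_1, …, X_N ∈ A. Define E_1 = Σ_{i=1}^N X_i, E_2 = (1/2)·Σ_{i=1}^{N−1} Σ_{j=i+1}^{N} [X_i, X_j], and E_3 = (1/12)·Σ_{i=1}^{N} Σ_{j=1, j≠i}^{N} [X_i,[X_i,X_j]] + (1/6)·Σ_{i=1}^{N−2} Σ_{j=i+1}^{N−1} Σ_{k=j+1}^{N} ( [X_i,[X_j,X_k]] + [[X_i,X_j],X_k] ). Then, as real t → 0, ‖exp(t X_1) · exp(t X_2) ⋯ exp(t X_N) − exp( t·E_1 + t²·E_2 + t³·E_3 )‖ = O(|t|⁴). (This is the N-term Baker–Campbell–Hausdorff expansion truncated after third order.) -/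
open NormedSpace Filter Asymptotics Topology Finset

/-!
The engine is the two-term formula: for `Z t = t • a + t² • b + t³ • c`, both
`exp (Z t) * exp (t • x)` and `exp (Z' t)`, where `Z'` is the third-order BCH update of `Z`
by `x`, agree up to `O(t⁴)` with one and the same cubic polynomial in `t`, obtained by
truncating the exponential series and multiplying the truncations. The `N`-term formula then
follows by induction on `N`: the coefficients `E₁, E₂, E₃` for `m + 1` factors arise from those
for `m` factors by exactly this update, a bookkeeping of ordered sums in which the Jacobi
identity accounts for the mixed third-order terms.
-/

attribute [local instance] LieRing.ofAssociativeRing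

theorem Asymptotics.IsBigO.mul_sub_mul {α R : Type*} [SeminormedRing R] {l : Filter α}
    {k : α → ℝ} {f f' g g' : α → R} (hf : (fun x => f x - f' x) =O[l] k)
    (hg : (fun x => g x - g' x) =O[l] k) (hg₁ : g =O[l] (fun _ => (1 : ℝ)))
    (hf'₁ : f' =O[l] (fun _ => (1 : ℝ))) :
    (fun x => f x * g x - f' x * g' x) =O[l] k := by
  have key : ∀ x, f x * g x - f' x * g' x = (f x - f' x) * g x + f' x * (g x - g' x) :=
    fun x => by noncomm_ring
  have h₁ : (fun x => (f x - f' x) * g x) =O[l] k := by simpa using hf.mul hg₁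
  have h₂ : (fun x => f' x * (g x - g' x)) =O[l] k := by simpa using hf'₁.mul hg
  simpa only [key] using h₁.add h₂

theorem Asymptotics.isBigO_pow_smul {𝕜 E : Type*} [NormedField 𝕜] [SeminormedAddCommGroup E]
    [NormedSpace 𝕜 E] {g : 𝕜 → E} (hg : ContinuousAt g 0) (n : ℕ) :
    (fun t => t ^ n • g t) =O[𝓝 0] fun t => ‖t‖ ^ n := by
  simpa using (isBigO_refl (fun t : 𝕜 => t ^ n) (𝓝 0)).norm_right.smul (hg.tendsto.isBigO_one ℝ)

section IccSums

variable {M : Type*} [AddCommMonoid M]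

theorem Finset.sum_Icc_sub_one_sum_Icc (a n : ℕ) (f : ℕ → ℕ → M) :
    ∑ i ∈ Icc a (n - 1), ∑ j ∈ Icc (i + 1) n, f i j =
      ∑ i ∈ Icc a n, ∑ j ∈ Icc (i + 1) n, f i j := by
  refine sum_subset (Icc_subset_Icc le_rfl (n.sub_le 1)) fun i hi hi' => ?_
  simp only [mem_Icc] at hi hi'
  rw [Icc_eq_empty (by omega), sum_empty]

theorem Finset.sum_Icc_sum_Icc_succ (a m : ℕ) (f : ℕ → ℕ → M) :
    ∑ i ∈ Icc a (m + 1), ∑ j ∈ Icc (i + 1) (m + 1), f i j =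
      ∑ i ∈ Icc a m, ∑ j ∈ Icc (i + 1) m, f i j + ∑ i ∈ Icc a m, f i (m + 1) := by
  rw [← sum_Icc_sub_one_sum_Icc, Nat.add_sub_cancel, ← sum_add_distrib]
  refine sum_congr rfl fun i hi => sum_Icc_succ_top ?_ _
  simp only [mem_Icc] at hi
  omega

theorem Finset.sum_Icc_sum_Icc_sum_Icc_succ (a m : ℕ) (f : ℕ → ℕ → ℕ → M) :
    ∑ i ∈ Icc a (m + 1), ∑ j ∈ Icc (i + 1) (m + 1), ∑ k ∈ Icc (j + 1) (m + 1), f i j k =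
      ∑ i ∈ Icc a m, ∑ j ∈ Icc (i + 1) m, ∑ k ∈ Icc (j + 1) m, f i j k +
        ∑ i ∈ Icc a m, ∑ j ∈ Icc (i + 1) m, f i j (m + 1) := by
  rw [← sum_add_distrib, ← sum_Icc_sub_one_sum_Icc, Nat.add_sub_cancel]
  exact sum_congr rfl fun i _ => sum_Icc_sum_Icc_succ (i + 1) m (f i)

theorem Finset.sum_Icc_sum_Icc_eq_sum_diag_add (m : ℕ) (f : ℕ → ℕ → M) :
    ∑ i ∈ Icc 1 m, ∑ j ∈ Icc 1 m, f i j =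
      ∑ i ∈ Icc 1 m, f i i + ∑ i ∈ Icc 1 m, ∑ j ∈ Icc (i + 1) m, (f i j + f j i) := by
  induction m with
  | zero => simp
  | succ m ih =>
    have hsplit : ∀ g : ℕ → M, ∑ i ∈ Icc 1 (m + 1), g i = ∑ i ∈ Icc 1 m, g i + g (m + 1) :=
      fun g => sum_Icc_succ_top (by omega) g
    rw [sum_Icc_sum_Icc_succ, hsplit, hsplit, sum_congr rfl fun i _ => hsplit (f i)]
    simp only [sum_add_distrib, ih, hsplit]
    abel

end IccSums

namespace BCH

section Coefficients

variable (𝕜 : Type*) {A : Type*} [Field 𝕜] [Ring A] [Algebra 𝕜 A]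

def E₁ (X : ℕ → A) (m : ℕ) : A := ∑ i ∈ Icc 1 m, X i

def E₂ (X : ℕ → A) (m : ℕ) : A := (2 : 𝕜)⁻¹ • ∑ i ∈ Icc 1 m, ∑ j ∈ Icc (i + 1) m, ⁅X i, X j⁆

def E₃ (X : ℕ → A) (m : ℕ) : A :=
  (12 : 𝕜)⁻¹ • ∑ i ∈ Icc 1 m, ∑ j ∈ (Icc 1 m).erase i, ⁅X i, ⁅X i, X j⁆⁆ +
    (6 : 𝕜)⁻¹ • ∑ i ∈ Icc 1 m, ∑ j ∈ Icc (i + 1) m, ∑ k ∈ Icc (j + 1) m,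
      (⁅X i, ⁅X j, X k⁆⁆ + ⁅⁅X i, X j⁆, X k⁆)

variable {𝕜}

theorem E₁_succ (X : ℕ → A) (m : ℕ) : E₁ X (m + 1) = E₁ X m + X (m + 1) :=
  sum_Icc_succ_top (by omega) X

theorem E₂_succ (X : ℕ → A) (m : ℕ) :
    E₂ 𝕜 X (m + 1) = E₂ 𝕜 X m + (2 : 𝕜)⁻¹ • ⁅E₁ X m, X (m + 1)⁆ := by
  rw [E₂, E₂, E₁, sum_Icc_sum_Icc_succ, smul_add, sum_lie]

theorem E₃_eq_sum_lie_lie_E₁ (X : ℕ → A) (m : ℕ) :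
    E₃ 𝕜 X m = (12 : 𝕜)⁻¹ • ∑ i ∈ Icc 1 m, ⁅X i, ⁅X i, E₁ X m⁆⁆ +
      (6 : 𝕜)⁻¹ • ∑ i ∈ Icc 1 m, ∑ j ∈ Icc (i + 1) m, ∑ k ∈ Icc (j + 1) m,
        (⁅X i, ⁅X j, X k⁆⁆ + ⁅⁅X i, X j⁆, X k⁆) := by
  rw [E₃, E₁]
  congr 2
  refine sum_congr rfl fun i _ => ?_
  rw [lie_sum, lie_sum, sum_erase _ (by rw [lie_self, lie_zero])]

theorem lie_E₁_lie_E₁ (X : ℕ → A) (m : ℕ) (x : A) :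
    ⁅E₁ X m, ⁅E₁ X m, x⁆⁆ = ∑ i ∈ Icc 1 m, ⁅X i, ⁅X i, x⁆⁆ +
      ∑ i ∈ Icc 1 m, ∑ j ∈ Icc (i + 1) m, ((2 : ℤ) • ⁅X i, ⁅X j, x⁆⁆ - ⁅⁅X i, X j⁆, x⁆) := by
  simp only [E₁, sum_lie, lie_sum]
  rw [sum_Icc_sum_Icc_eq_sum_diag_add]
  congr! 3 with i _ j _
  rw [lie_lie]
  abel

theorem E₃_succ [CharZero 𝕜] (X : ℕ → A) (m : ℕ) :
    E₃ 𝕜 X (m + 1) = E₃ 𝕜 X m + (2 : 𝕜)⁻¹ • ⁅E₂ 𝕜 X m, X (m + 1)⁆ +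
      (12 : 𝕜)⁻¹ • ⁅E₁ X m, ⁅E₁ X m, X (m + 1)⁆⁆ +
        (12 : 𝕜)⁻¹ • ⁅X (m + 1), ⁅X (m + 1), E₁ X m⁆⁆ := by
  rw [E₃_eq_sum_lie_lie_E₁, E₃_eq_sum_lie_lie_E₁, E₁_succ, sum_Icc_succ_top (by omega),
    sum_Icc_sum_Icc_sum_Icc_succ, lie_E₁_lie_E₁, E₂, smul_lie, sum_lie]
  simp only [lie_add, lie_self, add_zero, sum_add_distrib, sum_sub_distrib, sum_lie, ← smul_sum]
  module

end Coefficients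

section Analysis

variable {𝕜 A : Type*} [RCLike 𝕜] [NormedRing A] [NormedAlgebra 𝕜 A]

def cubic (a b c : A) (t : 𝕜) : A := 1 + t • a + t ^ 2 • b + t ^ 3 • c

theorem continuous_cubic (a b c : A) : Continuous (cubic (𝕜 := 𝕜) a b c) := by
  unfold cubic; fun_prop

theorem cubic_mul_cubic (a₁ a₂ a₃ b₁ b₂ b₃ : A) (t : 𝕜) :
    cubic a₁ a₂ a₃ t * cubic b₁ b₂ b₃ t =
      cubic (a₁ + b₁) (a₂ + a₁ * b₁ + b₂) (a₃ + a₂ * b₁ + a₁ * b₂ + b₃) t +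
        t ^ 4 • (a₃ * b₁ + a₂ * b₂ + a₁ * b₃ + t • (a₃ * b₂ + a₂ * b₃) + t ^ 2 • (a₃ * b₃)) := by
  simp only [cubic, mul_add, add_mul, smul_mul_smul_comm, one_mul, mul_one, smul_add, ← pow_add,
    smul_smul]
  module

theorem cubic_mul_cubic_sub_isBigO (a₁ a₂ a₃ b₁ b₂ b₃ : A) :
    (fun t : 𝕜 => cubic a₁ a₂ a₃ t * cubic b₁ b₂ b₃ t -
      cubic (a₁ + b₁) (a₂ + a₁ * b₁ + b₂) (a₃ + a₂ * b₁ + a₁ * b₂ + b₃) t)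
      =O[𝓝 0] fun t => ‖t‖ ^ 4 := by
  refine (isBigO_pow_smul (g := fun t : 𝕜 => a₃ * b₁ + a₂ * b₂ + a₁ * b₃ +
    t • (a₃ * b₂ + a₂ * b₃) + t ^ 2 • (a₃ * b₃)) (by fun_prop) 4).congr_left fun t => ?_
  rw [cubic_mul_cubic, add_sub_cancel_left]

theorem expSeries_partialSum_four (y : A) :
    (expSeries 𝕜 A).partialSum 4 y = 1 + y + (2 : 𝕜)⁻¹ • y ^ 2 + (6 : 𝕜)⁻¹ • y ^ 3 := by
  simp [FormalMultilinearSeries.partialSum, sum_range_succ, expSeries_apply_eq, Nat.factorial]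

theorem expSeries_partialSum_four_smul (a b c u v : A) (t : 𝕜) (hv : v = b + t • c)
    (hu : u = a + t • v) :
    (expSeries 𝕜 A).partialSum 4 (t • u) =
      cubic a (b + (2 : 𝕜)⁻¹ • a ^ 2) (c + (2 : 𝕜)⁻¹ • (a * b + b * a) + (6 : 𝕜)⁻¹ • a ^ 3) t +
        t ^ 4 • ((2 : 𝕜)⁻¹ • (a * c + c * a + v ^ 2) +
          (6 : 𝕜)⁻¹ • (v * u ^ 2 + a * v * u + a ^ 2 * v)) := by
  subst hu hv
  simp only [expSeries_partialSum_four, cubic, pow_succ, pow_zero, one_mul, mul_add, add_mul,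
    smul_mul_assoc, mul_smul_comm, smul_add, smul_smul, mul_assoc]
  module

theorem exp_sub_cubic_isBigO [CompleteSpace A] (a b c : A) :
    (fun t : 𝕜 => exp (t • a + t ^ 2 • b + t ^ 3 • c) -
      cubic a (b + (2 : 𝕜)⁻¹ • a ^ 2) (c + (2 : 𝕜)⁻¹ • (a * b + b * a) + (6 : 𝕜)⁻¹ • a ^ 3) t)
      =O[𝓝 0] fun t => ‖t‖ ^ 4 := by
  set v : 𝕜 → A := fun t => b + t • c
  set u : 𝕜 → A := fun t => a + t • v t
  have hu : Continuous u := by fun_prop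
  have hy : ∀ t : 𝕜, t • a + t ^ 2 • b + t ^ 3 • c = t • u t := fun t => by
    simp only [u, v, smul_add, smul_smul]
    module
  have hy₀ : Tendsto (fun t : 𝕜 => t • u t) (𝓝 0) (𝓝 0) := by
    simpa using (show Continuous fun t : 𝕜 => t • u t by fun_prop).tendsto 0
  have taylor :=
    ((exp_hasFPowerSeriesAt_zero (𝕂 := 𝕜)).isBigO_sub_partialSum_pow 4).comp_tendsto hy₀
  have hy_norm : (fun t : 𝕜 => ‖t • u t‖ ^ 4) =O[𝓝 0] fun t => ‖t‖ ^ 4 := by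
    simpa using (isBigO_pow_smul hu.continuousAt 1).norm_left.pow 4
  have remainder := isBigO_pow_smul (g := fun t : 𝕜 => (2 : 𝕜)⁻¹ • (a * c + c * a + v t ^ 2) +
    (6 : 𝕜)⁻¹ • (v t * u t ^ 2 + a * v t * u t + a ^ 2 * v t)) (by fun_prop) 4
  refine ((taylor.trans hy_norm).add remainder).congr_left fun t => ?_
  simp only [Function.comp_apply, zero_add, hy,
    expSeries_partialSum_four_smul a b c (u t) (v t) t rfl rfl]
  abel

theorem exp_comp_isBigO_one [CompleteSpace A] {y : 𝕜 → A} (hy : ContinuousAt y 0) :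
    (fun t => exp (y t)) =O[𝓝 0] fun _ => (1 : ℝ) :=
  ((exp_analytic (𝕂 := 𝕜) _).continuousAt.comp hy).tendsto.isBigO_one ℝ

theorem exp_mul_exp_sub_exp_isBigO [CompleteSpace A] (a b c x : A) :
    (fun t : 𝕜 => exp (t • a + t ^ 2 • b + t ^ 3 • c) * exp (t • x) -
      exp (t • (a + x) + t ^ 2 • (b + (2 : 𝕜)⁻¹ • ⁅a, x⁆) +
        t ^ 3 • (c + (2 : 𝕜)⁻¹ • ⁅b, x⁆ + (12 : 𝕜)⁻¹ • ⁅a, ⁅a, x⁆⁆ + (12 : 𝕜)⁻¹ • ⁅x, ⁅x, a⁆⁆)))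
      =O[𝓝 0] fun t => ‖t‖ ^ 4 := by
  have hx : (fun t : 𝕜 => exp (t • x) - cubic x ((2 : 𝕜)⁻¹ • x ^ 2) ((6 : 𝕜)⁻¹ • x ^ 3) t)
      =O[𝓝 0] fun t => ‖t‖ ^ 4 := by
    simpa using exp_sub_cubic_isBigO (𝕜 := 𝕜) x 0 0
  have hprod := (exp_sub_cubic_isBigO a b c).mul_sub_mul hx (exp_comp_isBigO_one (by fun_prop))
    ((continuous_cubic _ _ _).continuousAt.tendsto.isBigO_one ℝ)
  have htrunc := cubic_mul_cubic_sub_isBigO (𝕜 := 𝕜) a (b + (2 : 𝕜)⁻¹ • a ^ 2)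
    (c + (2 : 𝕜)⁻¹ • (a * b + b * a) + (6 : 𝕜)⁻¹ • a ^ 3) x ((2 : 𝕜)⁻¹ • x ^ 2) ((6 : 𝕜)⁻¹ • x ^ 3)
  have hZ' := exp_sub_cubic_isBigO (𝕜 := 𝕜) (a + x) (b + (2 : 𝕜)⁻¹ • ⁅a, x⁆)
    (c + (2 : 𝕜)⁻¹ • ⁅b, x⁆ + (12 : 𝕜)⁻¹ • ⁅a, ⁅a, x⁆⁆ + (12 : 𝕜)⁻¹ • ⁅x, ⁅x, a⁆⁆)
  refine ((hprod.add htrunc).sub hZ').congr_left fun t => ?_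
  have h₂ : b + (2 : 𝕜)⁻¹ • a ^ 2 + a * x + (2 : 𝕜)⁻¹ • x ^ 2 =
      b + (2 : 𝕜)⁻¹ • ⁅a, x⁆ + (2 : 𝕜)⁻¹ • (a + x) ^ 2 := by
    simp only [Ring.lie_def, sq, add_mul, mul_add]
    module
  have h₃ : c + (2 : 𝕜)⁻¹ • (a * b + b * a) + (6 : 𝕜)⁻¹ • a ^ 3 + (b + (2 : 𝕜)⁻¹ • a ^ 2) * x +
      a * ((2 : 𝕜)⁻¹ • x ^ 2) + (6 : 𝕜)⁻¹ • x ^ 3 =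
      c + (2 : 𝕜)⁻¹ • ⁅b, x⁆ + (12 : 𝕜)⁻¹ • ⁅a, ⁅a, x⁆⁆ + (12 : 𝕜)⁻¹ • ⁅x, ⁅x, a⁆⁆ +
        (2 : 𝕜)⁻¹ • ((a + x) * (b + (2 : 𝕜)⁻¹ • ⁅a, x⁆) + (b + (2 : 𝕜)⁻¹ • ⁅a, x⁆) * (a + x)) +
        (6 : 𝕜)⁻¹ • (a + x) ^ 3 := by
    simp only [Ring.lie_def, pow_succ, pow_zero, one_mul, add_mul, mul_add, sub_mul, mul_sub,
      smul_mul_assoc, mul_smul_comm, smul_add, smul_sub, smul_smul, mul_assoc]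
    module
  rw [h₂, h₃]
  abel

theorem prod_exp_sub_exp_isBigO [CompleteSpace A] (X : ℕ → A) (m : ℕ) :
    (fun t : 𝕜 => ((List.range m).map fun i => exp (t • X (i + 1))).prod -
      exp (t • E₁ X m + t ^ 2 • E₂ 𝕜 X m + t ^ 3 • E₃ 𝕜 X m)) =O[𝓝 0] fun t => ‖t‖ ^ 4 := by
  induction m with
  | zero => simpa [E₁, E₂, E₃] using isBigO_zero (fun t : 𝕜 => ‖t‖ ^ 4) (𝓝 0)
  | succ m ih =>
    have hstep := ih.mul_sub_mul (g := fun t : 𝕜 => exp (t • X (m + 1)))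
      (g' := fun t : 𝕜 => exp (t • X (m + 1))) (by simpa using isBigO_zero _ _)
      (exp_comp_isBigO_one (by fun_prop)) (exp_comp_isBigO_one (by fun_prop))
    refine (hstep.add (exp_mul_exp_sub_exp_isBigO (E₁ X m) (E₂ 𝕜 X m) (E₃ 𝕜 X m)
      (X (m + 1)))).congr_left fun t => ?_
    rw [List.range_succ, List.map_append, List.prod_append, E₁_succ, E₂_succ, E₃_succ]
    simp only [List.map_cons, List.map_nil, List.prod_cons, List.prod_nil, mul_one]
    abel

end Analysis

end BCH

theorem nterm_BCH_order_three_general {A : Type*} [NormedRing A] [NormedAlgebra ℂ A]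
    [CompleteSpace A] (N : ℕ) (X : ℕ → A)
    (E₁ E₂ E₃ : A)
    (hE₁ : E₁ = ∑ i ∈ Finset.Icc 1 N, X i)
    (hE₂ : E₂ = (2 : ℂ)⁻¹ •
      ∑ i ∈ Finset.Icc 1 (N - 1), ∑ j ∈ Finset.Icc (i + 1) N,
        (X i * X j - X j * X i))
    (hE₃ : E₃ = (12 : ℂ)⁻¹ •
        (∑ i ∈ Finset.Icc 1 N, ∑ j ∈ (Finset.Icc 1 N).erase i,
          (X i * (X i * X j - X j * X i) - (X i * X j - X j * X i) * X i)) +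
      (6 : ℂ)⁻¹ •
        (∑ i ∈ Finset.Icc 1 (N - 2), ∑ j ∈ Finset.Icc (i + 1) (N - 1),
          ∑ k ∈ Finset.Icc (j + 1) N,
            ((X i * (X j * X k - X k * X j) - (X j * X k - X k * X j) * X i) +
              ((X i * X j - X j * X i) * X k - X k * (X i * X j - X j * X i))))) :
    (fun t : ℝ =>
        ((List.range N).map (fun i => NormedSpace.exp ((t : ℂ) • X (i + 1)))).prod -
          NormedSpace.exp
            ((t : ℂ) • E₁ + ((t : ℂ) ^ 2) • E₂ + ((t : ℂ) ^ 3) • E₃))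
      =O[nhds (0 : ℝ)] fun t : ℝ => |t| ^ 4 := by
  rw [show N - 2 = N - 1 - 1 by omega, sum_Icc_sub_one_sum_Icc] at hE₃
  simp only [sum_Icc_sub_one_sum_Icc] at hE₂ hE₃
  obtain rfl : E₁ = BCH.E₁ X N := hE₁
  obtain rfl : E₂ = BCH.E₂ ℂ X N := hE₂
  obtain rfl : E₃ = BCH.E₃ ℂ X N := hE₃
  simpa [Function.comp_def] using (BCH.prod_exp_sub_exp_isBigO X N).comp_tendsto
    (Complex.continuous_ofReal.tendsto' 0 0 Complex.ofReal_zero)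

/-- **N-term BCH expansion truncated after third order.**
In a complex unital Banach algebra `A`, for `X 1, …, X N ∈ A`, with
`E₁ = ∑ᵢ Xᵢ`, `E₂ = (1/2) ∑_{i<j} [Xᵢ,Xⱼ]`,
`E₃ = (1/12) ∑ᵢ ∑_{j≠i} [Xᵢ,[Xᵢ,Xⱼ]] + (1/6) ∑_{i<j<k} ([Xᵢ,[Xⱼ,X_k]] + [[Xᵢ,Xⱼ],X_k])`,
as real `t → 0`, `‖exp(t X₁)⋯exp(t X_N) − exp(t E₁ + t² E₂ + t³ E₃)‖ = O(|t|⁴)`. -/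
theorem nterm_BCH_order_three {A : Type*} [NormedRing A] [NormedAlgebra ℂ A]
    [CompleteSpace A] (N : ℕ) (hN : 1 ≤ N) (X : ℕ → A)
    (E₁ E₂ E₃ : A)
    (hE₁ : E₁ = ∑ i ∈ Finset.Icc 1 N, X i)
    (hE₂ : E₂ = (2 : ℂ)⁻¹ •
      ∑ i ∈ Finset.Icc 1 (N - 1), ∑ j ∈ Finset.Icc (i + 1) N,
        (X i * X j - X j * X i))
    (hE₃ : E₃ = (12 : ℂ)⁻¹ •
        (∑ i ∈ Finset.Icc 1 N, ∑ j ∈ (Finset.Icc 1 N).erase i,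
          (X i * (X i * X j - X j * X i) - (X i * X j - X j * X i) * X i)) +
      (6 : ℂ)⁻¹ •
        (∑ i ∈ Finset.Icc 1 (N - 2), ∑ j ∈ Finset.Icc (i + 1) (N - 1),
          ∑ k ∈ Finset.Icc (j + 1) N,
            ((X i * (X j * X k - X k * X j) - (X j * X k - X k * X j) * X i) +
              ((X i * X j - X j * X i) * X k - X k * (X i * X j - X j * X i))))) :
    (fun t : ℝ =>
        ((List.range N).map (fun i => NormedSpace.exp ((t : ℂ) • X (i + 1)))).prod -
          NormedSpace.exp
            ((t : ℂ) • E₁ + ((t : ℂ) ^ 2) • E₂ + ((t : ℂ) ^ 3) • E₃))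
      =O[nhds (0 : ℝ)] fun t : ℝ => |t| ^ 4 :=
  nterm_BCH_order_three_general N X E₁ E₂ E₃ hE₁ hE₂ hE₃
end

section
/- Let A be a complex unital Banach algebra, let s ≥ 1, N ≥ 1, X_1, …, X_N ∈ A, and α_k^{[ℓ]} ∈ ℂ (k = 1,…,s; ℓ = 1,…,N). Define the splitting product P(t) := ∏_{k=1}^{s} ∏_{ℓ=1}^{N} exp(α_k^{[ℓ]} t X_ℓ), with factors multiplied left to right in increasing k, and within each k in increasing ℓ. Define C_{ℓ₁,ℓ₂} := (1/2)·Σ_{k=1}^{s} [ α_k^{[ℓ₂]}·(Σ_{j=1}^{k} α_j^{[ℓ₁]}) − α_k^{[ℓ₁]}·(Σ_{j=1}^{k−1} α_j^{[ℓ₂]}) ] for 1 ≤ ℓ₁ < ℓ₂ ≤ N. Then, as real t → 0, ‖P(t) − exp( t·Σ_{ℓ=1}^N (Σ_{k=1}^s α_k^{[ℓ]})·X_ℓ + t²·Σ_{ℓ₁=1}^{N−1} Σ_{ℓ₂=ℓ₁+1}^{N} C_{ℓ₁,ℓ₂}·[X_{ℓ₁},X_{ℓ₂}] )‖ = O(|t|³).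 -/
/-!
Write `f ≈ (a₀, a₁, a₂)` when `f t = a₀ + t a₁ + t² a₂ + O(|t|³)`. These second-order jets
multiply like truncated polynomials, and Taylor's formula for the analytic exponential gives
`exp (t B + t² C) ≈ (1, B, B²/2 + C)`. Hence a product of exponentials `∏ exp (t bᵢ)` has jet
`(1, ∑ bᵢ, ∑ᵢ (bᵢ²/2 + (∑_{j<i} bⱼ) bᵢ))`, and the second coefficient is
`(∑ bᵢ)²/2 + ½ ∑_{j<i} [bⱼ, bᵢ]`. Applying this first inside each stage and then to the stage
sums `Y_k = ∑_ℓ α_k^{[ℓ]} X_ℓ`, and expanding `[∑_{j<k} Y_j, Y_k]` in the commutators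
`[X_m, X_ℓ]` with `m < ℓ`, produces exactly the coefficients `C_{m,ℓ}`. So the splitting product
and `exp (t B + t² ∑ C_{m,ℓ} [X_m, X_ℓ])` have the same jet, and their difference is `O(|t|³)`.
-/

open Asymptotics Filter Finset Topology

-- Makes the ring commutator `⁅x, y⁆ = x * y - y * x` a Lie bracket, so the Lie-algebra API applies.
attribute [local instance] LieRing.ofAssociativeRing

theorem sum_Icc_one_eq_sum_range {M : Type*} [AddCommMonoid M] (f : ℕ → M) (n : ℕ) :
    ∑ i ∈ Icc 1 n, f i = ∑ i ∈ range n, f (i + 1) := by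
  rw [← Ico_add_one_right_eq_Icc, sum_Ico_eq_sum_range]
  simp [add_comm]

theorem sum_Icc_sum_Icc_eq_sum_range_sum_range {M : Type*} [AddCommMonoid M]
    (g : ℕ → ℕ → M) (N : ℕ) :
    ∑ i ∈ Icc 1 (N - 1), ∑ j ∈ Icc (i + 1) N, g i j =
      ∑ j ∈ range N, ∑ i ∈ range j, g (i + 1) (j + 1) := by
  rw [sum_sigma', sum_sigma']
  refine sum_nbij' (fun p ↦ ⟨p.2 - 1, p.1 - 1⟩) (fun p ↦ ⟨p.2 + 1, p.1 + 1⟩) ?_ ?_ ?_ ?_ ?_ <;>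
    simp only [mem_Icc, mem_range, Sigma.forall, mem_sigma, Sigma.mk.injEq, heq_eq_eq]
  any_goals omega
  intro i j hij
  rw [Nat.sub_add_cancel (by omega), Nat.sub_add_cancel (by omega)]

theorem lie_sum_smul_sum_smul {R L : Type*} [CommRing R] [LieRing L] [LieAlgebra R L]
    (β γ : ℕ → R) (Y : ℕ → L) (n : ℕ) :
    ⁅∑ i ∈ range n, β i • Y i, ∑ i ∈ range n, γ i • Y i⁆ =
      ∑ i ∈ range n, ∑ j ∈ range i, (β j * γ i - β i * γ j) • ⁅Y j, Y i⁆ := by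
  induction n with
  | zero => simp
  | succ n ih =>
    rw [sum_range_succ, sum_range_succ, add_lie, lie_add, lie_add, ih, sum_range_succ]
    simp only [sum_lie, lie_sum, smul_lie, lie_smul, lie_self, smul_zero, add_zero, sub_smul,
      sum_sub_distrib, smul_sum, smul_smul, ← lie_skew (Y n), smul_neg, sum_neg_distrib,
      mul_comm (γ _) (β _)]
    abel

theorem sum_range_half_sq_add_prefix_mul {𝕜 R : Type*} [Field 𝕜] [CharZero 𝕜] [Ring R]
    [Algebra 𝕜 R] (b : ℕ → R) (n : ℕ) :
    ∑ i ∈ range n, ((2 : 𝕜)⁻¹ • b i ^ 2 + (∑ j ∈ range i, b j) * b i) =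
      (2 : 𝕜)⁻¹ • (∑ i ∈ range n, b i) ^ 2 +
        (2 : 𝕜)⁻¹ • ∑ i ∈ range n, ⁅∑ j ∈ range i, b j, b i⁆ := by
  induction n with
  | zero => simp
  | succ n ih =>
    rw [sum_range_succ, ih, sum_range_succ, sum_range_succ, Ring.lie_def]
    simp only [sq, add_mul, mul_add, smul_add, smul_sub]
    module

theorem splitting_second_order_coeff {𝕜 R : Type*} [Field 𝕜] [CharZero 𝕜] [Ring R] [Algebra 𝕜 R]
    (a : ℕ → ℕ → 𝕜) (x : ℕ → R) (s N : ℕ) {Y : ℕ → R}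
    (hY : ∀ k, Y k = ∑ ℓ ∈ range N, a k ℓ • x ℓ) :
    ∑ k ∈ range s, (((2 : 𝕜)⁻¹ • Y k ^ 2 +
        (2 : 𝕜)⁻¹ • ∑ ℓ ∈ range N, ∑ m ∈ range ℓ, (a k ℓ * a k m) • ⁅x m, x ℓ⁆) +
        (∑ j ∈ range k, Y j) * Y k) =
      (2 : 𝕜)⁻¹ • (∑ k ∈ range s, Y k) ^ 2 +
        ∑ ℓ ∈ range N, ∑ m ∈ range ℓ, ((2 : 𝕜)⁻¹ * ∑ k ∈ range s,
          (a k ℓ * ∑ j ∈ range (k + 1), a j m - a k m * ∑ j ∈ range k, a j ℓ)) • ⁅x m, x ℓ⁆ := by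
  have hprefix (k : ℕ) : ∑ j ∈ range k, Y j = ∑ ℓ ∈ range N, (∑ j ∈ range k, a j ℓ) • x ℓ := by
    simp only [hY, sum_smul]
    exact sum_comm
  have hstage (k : ℕ) : ⁅∑ j ∈ range k, Y j, Y k⁆ +
      ∑ ℓ ∈ range N, ∑ m ∈ range ℓ, (a k ℓ * a k m) • ⁅x m, x ℓ⁆ =
      ∑ ℓ ∈ range N, ∑ m ∈ range ℓ,
        (a k ℓ * ∑ j ∈ range (k + 1), a j m - a k m * ∑ j ∈ range k, a j ℓ) • ⁅x m, x ℓ⁆ := by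
    rw [hprefix, hY, lie_sum_smul_sum_smul, ← sum_add_distrib]
    refine sum_congr rfl fun ℓ _ ↦ ?_
    rw [← sum_add_distrib]
    refine sum_congr rfl fun m _ ↦ ?_
    rw [← add_smul, sum_range_succ]
    ring_nf
  calc _ = ∑ k ∈ range s, ((2 : 𝕜)⁻¹ • Y k ^ 2 + (∑ j ∈ range k, Y j) * Y k) +
        (2 : 𝕜)⁻¹ • ∑ k ∈ range s, ∑ ℓ ∈ range N, ∑ m ∈ range ℓ,
          (a k ℓ * a k m) • ⁅x m, x ℓ⁆ := by
        rw [smul_sum, ← sum_add_distrib]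
        exact sum_congr rfl fun k _ ↦ add_right_comm _ _ _
    _ = (2 : 𝕜)⁻¹ • (∑ k ∈ range s, Y k) ^ 2 + (2 : 𝕜)⁻¹ • ∑ k ∈ range s,
          ∑ ℓ ∈ range N, ∑ m ∈ range ℓ,
            (a k ℓ * ∑ j ∈ range (k + 1), a j m - a k m * ∑ j ∈ range k, a j ℓ) • ⁅x m, x ℓ⁆ := by
        rw [sum_range_half_sq_add_prefix_mul, add_assoc, ← smul_add, ← sum_add_distrib]
        simp only [hstage]
    _ = _ := by
        rw [sum_comm, smul_sum]
        congr 1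
        refine sum_congr rfl fun ℓ _ ↦ ?_
        rw [sum_comm, smul_sum]
        refine sum_congr rfl fun m _ ↦ ?_
        rw [mul_smul, sum_smul]

section Expansion

variable {A : Type*} [NormedRing A] [NormedAlgebra ℂ A]

def HasQuadraticExpansion (f : ℝ → A) (a₀ a₁ a₂ : A) : Prop :=
  (fun t : ℝ ↦ f t - (a₀ + (t : ℂ) • a₁ + (t : ℂ) ^ 2 • a₂)) =O[𝓝 0] fun t ↦ |t| ^ 3

theorem isBigO_ofReal_pow_smul {m n : ℕ} (hmn : m ≤ n) (v : A) :
    (fun t : ℝ ↦ (t : ℂ) ^ n • v) =O[𝓝 0] fun t ↦ |t| ^ m := by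
  refine IsBigO.of_bound ‖v‖ ?_
  filter_upwards [Metric.closedBall_mem_nhds (0 : ℝ) one_pos] with t ht
  rw [mem_closedBall_zero_iff, Real.norm_eq_abs] at ht
  rw [norm_smul, norm_pow, Complex.norm_real, Real.norm_eq_abs, norm_pow, Real.norm_eq_abs,
    abs_abs, mul_comm]
  exact mul_le_mul_of_nonneg_left (pow_le_pow_of_le_one (abs_nonneg t) ht hmn) (norm_nonneg v)

theorem quadratic_isBigO_one (a₀ a₁ a₂ : A) :
    (fun t : ℝ ↦ a₀ + (t : ℂ) • a₁ + (t : ℂ) ^ 2 • a₂) =O[𝓝 0] fun _ ↦ (1 : ℝ) := by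
  simpa using ((isBigO_ofReal_pow_smul le_rfl a₀).add
    (isBigO_ofReal_pow_smul (Nat.zero_le 1) a₁)).add (isBigO_ofReal_pow_smul (Nat.zero_le 2) a₂)

namespace HasQuadraticExpansion

variable {f g : ℝ → A} {a₀ a₁ a₂ b₀ b₁ b₂ : A}

theorem isBigO_one (hf : HasQuadraticExpansion f a₀ a₁ a₂) :
    f =O[𝓝 0] fun _ ↦ (1 : ℝ) := by
  have hR := IsBigO.trans hf (Tendsto.isBigO_one ℝ ((continuous_abs.pow 3).tendsto (0 : ℝ)))
  simpa using hR.add (quadratic_isBigO_one a₀ a₁ a₂)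

theorem sub_isBigO (hf : HasQuadraticExpansion f a₀ a₁ a₂)
    (hg : HasQuadraticExpansion g a₀ a₁ a₂) :
    (fun t ↦ f t - g t) =O[𝓝 0] fun t ↦ |t| ^ 3 := by
  simpa using IsBigO.sub hf hg

theorem mul (hf : HasQuadraticExpansion f a₀ a₁ a₂) (hg : HasQuadraticExpansion g b₀ b₁ b₂) :
    HasQuadraticExpansion (fun t ↦ f t * g t) (a₀ * b₀) (a₀ * b₁ + a₁ * b₀)
      (a₀ * b₂ + a₁ * b₁ + a₂ * b₀) := by
  have hcubic := (isBigO_ofReal_pow_smul le_rfl (a₁ * b₂ + a₂ * b₁)).add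
    (isBigO_ofReal_pow_smul (by norm_num : 3 ≤ 4) (a₂ * b₂))
  have hfg : (fun t : ℝ ↦ (f t - (a₀ + (t : ℂ) • a₁ + (t : ℂ) ^ 2 • a₂)) * g t)
      =O[𝓝 0] fun t ↦ |t| ^ 3 := by
    simpa using IsBigO.mul hf hg.isBigO_one
  have hPg : (fun t : ℝ ↦ (a₀ + (t : ℂ) • a₁ + (t : ℂ) ^ 2 • a₂) *
      (g t - (b₀ + (t : ℂ) • b₁ + (t : ℂ) ^ 2 • b₂))) =O[𝓝 0] fun t ↦ |t| ^ 3 := by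
    simpa using (quadratic_isBigO_one a₀ a₁ a₂).mul hg
  refine ((hfg.add hPg).add hcubic).congr' ?_ (by simp)
  filter_upwards with t
  simp only [sub_mul, mul_sub, add_mul, mul_add, smul_mul_assoc, mul_smul_comm, smul_add, smul_smul]
  module

end HasQuadraticExpansion

theorem HasQuadraticExpansion.list_prod_range {f : ℕ → ℝ → A} {b c : ℕ → A}
    (h : ∀ i, HasQuadraticExpansion (f i) 1 (b i) (c i)) (n : ℕ) :
    HasQuadraticExpansion (fun t ↦ ((List.range n).map (f · t)).prod) 1 (∑ i ∈ range n, b i)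
      (∑ i ∈ range n, (c i + (∑ j ∈ range i, b j) * b i)) := by
  induction n with
  | zero => simpa [HasQuadraticExpansion] using isBigO_zero _ _
  | succ n ih =>
    convert ih.mul (h n) using 1
    · funext t; simp [List.range_succ]
    · simp
    · simp [sum_range_succ, add_comm]
    · simp [sum_range_succ]; abel

theorem hasQuadraticExpansion_exp [CompleteSpace A] (B C : A) :
    HasQuadraticExpansion (fun t : ℝ ↦ NormedSpace.exp ((t : ℂ) • B + (t : ℂ) ^ 2 • C)) 1 B
      ((2 : ℂ)⁻¹ • B ^ 2 + C) := by
  set u : ℝ → A := fun t ↦ (t : ℂ) • B + (t : ℂ) ^ 2 • C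
  have hu : u =O[𝓝 0] fun t ↦ |t| ^ 1 := by
    simpa only [pow_one] using
      (isBigO_ofReal_pow_smul le_rfl B).add (isBigO_ofReal_pow_smul one_le_two C)
  have hu0 : Tendsto u (𝓝 0) (𝓝 0) :=
    hu.trans_tendsto (by simpa using (continuous_abs.pow 1).tendsto (0 : ℝ))
  have htaylor := (NormedSpace.exp_hasFPowerSeriesAt_zero (𝕂 := ℂ) (𝔸 := A)
    |>.isBigO_sub_partialSum_pow 3).comp_tendsto hu0
  have hcubic := (isBigO_ofReal_pow_smul le_rfl ((2 : ℂ)⁻¹ • (B * C + C * B))).add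
    (isBigO_ofReal_pow_smul (by norm_num : 3 ≤ 4) ((2 : ℂ)⁻¹ • C ^ 2))
  have hu3 : (fun t ↦ ‖u t‖ ^ 3) =O[𝓝 0] fun t ↦ |t| ^ 3 := by
    simpa only [pow_one] using hu.norm_left.pow 3
  refine ((htaylor.trans hu3).add hcubic).congr' ?_ (by simp)
  filter_upwards with t
  simp only [u, Function.comp_apply, zero_add, FormalMultilinearSeries.partialSum,
    NormedSpace.expSeries_apply_eq, sum_range_succ, sum_range_zero, sq, add_mul,
    mul_add, smul_mul_assoc, mul_smul_comm, smul_add, smul_smul]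
  norm_num
  module

theorem hasQuadraticExpansion_list_prod_exp [CompleteSpace A] (c : ℕ → ℂ) (Y : ℕ → A) (n : ℕ) :
    HasQuadraticExpansion
      (fun t : ℝ ↦ ((List.range n).map fun i ↦ NormedSpace.exp ((c i * t) • Y i)).prod) 1
      (∑ i ∈ range n, c i • Y i)
      ((2 : ℂ)⁻¹ • (∑ i ∈ range n, c i • Y i) ^ 2 +
        (2 : ℂ)⁻¹ • ∑ i ∈ range n, ∑ j ∈ range i, (c i * c j) • ⁅Y j, Y i⁆) := by
  have hfactor (i : ℕ) : HasQuadraticExpansion (fun t : ℝ ↦ NormedSpace.exp ((c i * t) • Y i))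
      1 (c i • Y i) ((2 : ℂ)⁻¹ • (c i • Y i) ^ 2 + 0) := by
    simpa [mul_comm, smul_smul] using hasQuadraticExpansion_exp (c i • Y i) 0
  convert HasQuadraticExpansion.list_prod_range hfactor n using 1
  simp only [add_zero, sum_range_half_sq_add_prefix_mul, sum_lie, smul_lie,
    lie_smul, smul_sum, smul_smul]

end Expansion

theorem splitting_product_second_order_expansion_general {A : Type*} [NormedRing A]
    [NormedAlgebra ℂ A] [CompleteSpace A] (s N : ℕ)
    (X : ℕ → A) (α : ℕ → ℕ → ℂ) :
    (fun t : ℝ =>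
        ((List.range s).map (fun k =>
            ((List.range N).map (fun ℓ =>
                NormedSpace.exp ((α (k + 1) (ℓ + 1) * (t : ℂ)) • X (ℓ + 1)))).prod)).prod -
          NormedSpace.exp
            ((t : ℂ) • ∑ ℓ ∈ Finset.Icc 1 N, (∑ k ∈ Finset.Icc 1 s, α k ℓ) • X ℓ +
              ((t : ℂ) ^ 2) •
                ∑ ℓ₁ ∈ Finset.Icc 1 (N - 1), ∑ ℓ₂ ∈ Finset.Icc (ℓ₁ + 1) N,
                  ((1 / 2 : ℂ) * ∑ k ∈ Finset.Icc 1 s,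
                      (α k ℓ₂ * (∑ j ∈ Finset.Icc 1 k, α j ℓ₁) -
                        α k ℓ₁ * (∑ j ∈ Finset.Icc 1 (k - 1), α j ℓ₂))) •
                    (X ℓ₁ * X ℓ₂ - X ℓ₂ * X ℓ₁)))
      =O[nhds (0 : ℝ)] fun t : ℝ => |t| ^ 3 := by
  have hB : ∑ k ∈ range s, ∑ ℓ ∈ range N, α (k + 1) (ℓ + 1) • X (ℓ + 1) =
      ∑ ℓ ∈ Icc 1 N, (∑ k ∈ Icc 1 s, α k ℓ) • X ℓ := by
    simp only [sum_Icc_one_eq_sum_range, sum_smul]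
    exact sum_comm
  have hP := HasQuadraticExpansion.list_prod_range (fun k ↦ hasQuadraticExpansion_list_prod_exp
    (fun ℓ ↦ α (k + 1) (ℓ + 1)) (fun ℓ ↦ X (ℓ + 1)) N) s
  rw [splitting_second_order_coeff _ _ s N fun _ ↦ rfl, hB] at hP
  convert hP.sub_isBigO (hasQuadraticExpansion_exp _ _) using 6
  rw [sum_Icc_sum_Icc_eq_sum_range_sum_range]
  simp only [sum_Icc_one_eq_sum_range, Nat.add_sub_cancel, one_div, Ring.lie_def]

/-- **Second-order exponential expansion of a general `s`-stage, `N`-split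
operator-splitting product.**  With
`C_{ℓ₁,ℓ₂} = (1/2) ∑_{k=1}^{s} (α_k^{[ℓ₂]} (∑_{j=1}^{k} α_j^{[ℓ₁]}) −
α_k^{[ℓ₁]} (∑_{j=1}^{k−1} α_j^{[ℓ₂]}))`, as real `t → 0`,
`‖P(t) − exp(t ∑_ℓ (∑_k α_k^{[ℓ]}) X_ℓ + t² ∑_{ℓ₁<ℓ₂} C_{ℓ₁,ℓ₂} [X_{ℓ₁},X_{ℓ₂}])‖ = O(|t|³)`. -/
theorem splitting_product_second_order_expansion {A : Type*} [NormedRing A]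
    [NormedAlgebra ℂ A] [CompleteSpace A] (s N : ℕ) (hs : 1 ≤ s) (hN : 1 ≤ N)
    (X : ℕ → A) (α : ℕ → ℕ → ℂ) :
    (fun t : ℝ =>
        ((List.range s).map (fun k =>
            ((List.range N).map (fun ℓ =>
                NormedSpace.exp ((α (k + 1) (ℓ + 1) * (t : ℂ)) • X (ℓ + 1)))).prod)).prod -
          NormedSpace.exp
            ((t : ℂ) • ∑ ℓ ∈ Finset.Icc 1 N, (∑ k ∈ Finset.Icc 1 s, α k ℓ) • X ℓ +
              ((t : ℂ) ^ 2) •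
                ∑ ℓ₁ ∈ Finset.Icc 1 (N - 1), ∑ ℓ₂ ∈ Finset.Icc (ℓ₁ + 1) N,
                  ((1 / 2 : ℂ) * ∑ k ∈ Finset.Icc 1 s,
                      (α k ℓ₂ * (∑ j ∈ Finset.Icc 1 k, α j ℓ₁) -
                        α k ℓ₁ * (∑ j ∈ Finset.Icc 1 (k - 1), α j ℓ₂))) •
                    (X ℓ₁ * X ℓ₂ - X ℓ₂ * X ℓ₁)))
      =O[nhds (0 : ℝ)] fun t : ℝ => |t| ^ 3 :=
  splitting_product_second_order_expansion_general s N X α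
end

section
/- Let N > 2 be an integer and let α_k^{[ℓ]} ∈ ℂ for k = 1, 2 and ℓ = 1,…,N. Then the two-stage order conditions α_1^{[ℓ]} + α_2^{[ℓ]} = 1 (for all ℓ = 1,…,N) and α_2^{[ℓ₁]}·α_1^{[ℓ₂]} = 1/2 (for all 1 ≤ ℓ₁ < ℓ₂ ≤ N) hold if and only if either α_1^{[ℓ]} = 1/2 + i/2 and α_2^{[ℓ]} = 1/2 − i/2 for every ℓ, or α_1^{[ℓ]} = 1/2 − i/2 and α_2^{[ℓ]} = 1/2 + i/2 for every ℓ. In particular, there are exactly two two-stage, second-order, N-split operator-splitting methods for N > 2, and they are complex conjugates of each other. -/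
/-!
Write `aₗ = α_1^{[ℓ]}` and `bₗ = α_2^{[ℓ]}`. Since `b₁ aₗ = 1/2` for every `ℓ > 1`, all `aₗ` with
`ℓ > 1` agree, and since `bₗ a_N = 1/2` for every `ℓ < N`, all `bₗ` with `ℓ < N` agree. For
`N > 2` the index `2` lies in both ranges, so `a₂ + b₂ = 1` links the two constants, and the
first-order conditions at `ℓ = 1` and `ℓ = N` extend them to every `ℓ`. The coefficients are
therefore the roots `1/2 ± i/2` of `z² - z + 1/2`, the polynomial with sum `1` and product `1/2`.
-/

section TwoStage

variable {K : Type*} [Field K] {N : ℕ} {a b : ℕ → K} {c : K}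

theorem stageOne_eq_of_mul_eq (hc : c ≠ 0)
    (hprod : ∀ ℓ₁ ℓ₂, 1 ≤ ℓ₁ → ℓ₁ < ℓ₂ → ℓ₂ ≤ N → b ℓ₁ * a ℓ₂ = c) {ℓ : ℕ} (hℓ : 1 < ℓ)
    (hℓN : ℓ ≤ N) : a ℓ = a N := by
  have hb : b 1 ≠ 0 := left_ne_zero_of_mul (hprod 1 N le_rfl (hℓ.trans_le hℓN) le_rfl ▸ hc)
  exact mul_left_cancel₀ hb <| (hprod 1 ℓ le_rfl hℓ hℓN).trans
    (hprod 1 N le_rfl (hℓ.trans_le hℓN) le_rfl).symm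

theorem stageTwo_eq_of_mul_eq (hc : c ≠ 0)
    (hprod : ∀ ℓ₁ ℓ₂, 1 ≤ ℓ₁ → ℓ₁ < ℓ₂ → ℓ₂ ≤ N → b ℓ₁ * a ℓ₂ = c) {ℓ : ℕ} (hℓ : 1 ≤ ℓ)
    (hℓN : ℓ < N) : b ℓ = b 1 := by
  have ha : a N ≠ 0 := right_ne_zero_of_mul (hprod 1 N le_rfl (hℓ.trans_lt hℓN) le_rfl ▸ hc)
  exact mul_right_cancel₀ ha <| (hprod ℓ N hℓ hℓN le_rfl).trans
    (hprod 1 N le_rfl (hℓ.trans_lt hℓN) le_rfl).symm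

theorem twoStage_orderConditions_iff (hN : 2 < N) (hc : c ≠ 0) :
    ((∀ ℓ, 1 ≤ ℓ → ℓ ≤ N → a ℓ + b ℓ = 1) ∧
      (∀ ℓ₁ ℓ₂, 1 ≤ ℓ₁ → ℓ₁ < ℓ₂ → ℓ₂ ≤ N → b ℓ₁ * a ℓ₂ = c)) ↔
    ∃ z w, z + w = 1 ∧ w * z = c ∧ ∀ ℓ, 1 ≤ ℓ → ℓ ≤ N → a ℓ = z ∧ b ℓ = w := by
  constructor
  · rintro ⟨hsum, hprod⟩
    have hmid : a N + b 1 = 1 := by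
      rw [← stageOne_eq_of_mul_eq hc hprod one_lt_two hN.le,
        ← stageTwo_eq_of_mul_eq hc hprod one_le_two hN]
      exact hsum 2 one_le_two hN.le
    refine ⟨a N, b 1, hmid, hprod 1 N le_rfl (by omega) le_rfl, fun ℓ hℓ hℓN => ?_⟩
    rcases hℓ.eq_or_lt with rfl | hℓ'
    · exact ⟨by linear_combination hsum 1 le_rfl hℓN - hmid, rfl⟩
    refine ⟨stageOne_eq_of_mul_eq hc hprod hℓ' hℓN, ?_⟩
    rcases hℓN.eq_or_lt with rfl | hℓN'
    · linear_combination hsum ℓ hℓ le_rfl - hmid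
    · exact stageTwo_eq_of_mul_eq hc hprod hℓ hℓN'
  · rintro ⟨z, w, hzw, hwz, hα⟩
    refine ⟨fun ℓ hℓ hℓN => ?_, fun ℓ₁ ℓ₂ hℓ₁ hℓ₁₂ hℓ₂ => ?_⟩
    · rw [(hα ℓ hℓ hℓN).1, (hα ℓ hℓ hℓN).2, hzw]
    · rw [(hα ℓ₁ hℓ₁ (by omega)).2, (hα ℓ₂ (by omega) hℓ₂).1, hwz]

end TwoStage

theorem Complex.add_eq_one_and_mul_eq_half_iff {z w : ℂ} :
    (z + w = 1 ∧ w * z = 1 / 2) ↔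
      (z = 1 / 2 + I / 2 ∧ w = 1 / 2 - I / 2) ∨ (z = 1 / 2 - I / 2 ∧ w = 1 / 2 + I / 2) := by
  constructor
  · rintro ⟨hsum, hprod⟩
    obtain rfl : w = 1 - z := by linear_combination hsum
    have hroots : (z - (1 / 2 + I / 2)) * (z - (1 / 2 - I / 2)) = 0 := by
      linear_combination -hprod - I_sq / 4
    rcases mul_eq_zero.1 hroots with h | h
    · exact .inl ⟨by linear_combination h, by linear_combination -h⟩
    · exact .inr ⟨by linear_combination h, by linear_combination -h⟩
  · rintro (⟨rfl, rfl⟩ | ⟨rfl, rfl⟩) <;>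
      exact ⟨by ring, by linear_combination -I_sq / 4⟩

/-- **The only two-stage, second-order, `N`-split operator-splitting methods for
`N > 2`** have coefficients `α_1^{[ℓ]} = 1/2 ± i/2`, `α_2^{[ℓ]} = 1/2 ∓ i/2` for
every `ℓ`; i.e., the two-stage order conditions hold iff the coefficients are one
of these two conjugate methods. -/
theorem two_stage_second_order_Nsplit_classification (N : ℕ) (hN : 2 < N)
    (α : ℕ → ℕ → ℂ) :
    ((∀ ℓ, 1 ≤ ℓ → ℓ ≤ N → α 1 ℓ + α 2 ℓ = 1) ∧
      (∀ ℓ₁ ℓ₂, 1 ≤ ℓ₁ → ℓ₁ < ℓ₂ → ℓ₂ ≤ N → α 2 ℓ₁ * α 1 ℓ₂ = 1 / 2)) ↔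
    ((∀ ℓ, 1 ≤ ℓ → ℓ ≤ N →
        α 1 ℓ = 1 / 2 + Complex.I / 2 ∧ α 2 ℓ = 1 / 2 - Complex.I / 2) ∨
      (∀ ℓ, 1 ≤ ℓ → ℓ ≤ N →
        α 1 ℓ = 1 / 2 - Complex.I / 2 ∧ α 2 ℓ = 1 / 2 + Complex.I / 2)) := by
  rw [twoStage_orderConditions_iff hN (by norm_num)]
  constructor
  · rintro ⟨z, w, hzw, hwz, hα⟩
    rcases Complex.add_eq_one_and_mul_eq_half_iff.1 ⟨hzw, hwz⟩ with ⟨rfl, rfl⟩ | ⟨rfl, rfl⟩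
    exacts [.inl hα, .inr hα]
  · rintro (hα | hα)
    · obtain ⟨hzw, hwz⟩ := Complex.add_eq_one_and_mul_eq_half_iff.2 (.inl ⟨rfl, rfl⟩)
      exact ⟨_, _, hzw, hwz, hα⟩
    · obtain ⟨hzw, hwz⟩ := Complex.add_eq_one_and_mul_eq_half_iff.2 (.inr ⟨rfl, rfl⟩)
      exact ⟨_, _, hzw, hwz, hα⟩
end

section
/- Let N > 2 be an integer and suppose α_k^{[ℓ]} ∈ ℂ (k = 1, 2; ℓ = 1,…,N) satisfy α_1^{[ℓ]} + α_2^{[ℓ]} = 1 for all ℓ = 1,…,N and α_2^{[ℓ₁]}·α_1^{[ℓ₂]} = 1/2 for all 1 ≤ ℓ₁ < ℓ₂ ≤ N. Then all first-stage coefficients are equal to a common value γ (i.e., α_1^{[1]} = α_1^{[2]} = ⋯ = α_1^{[N]} = γ), all second-stage coefficients are equal to a common value η (i.e., α_2^{[1]} = ⋯ = α_2^{[N]} = η), and γ + η = 1 and γ·η = 1/2. -/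
/-!
Fixing `ℓ₁ = 1` in the second-order conditions shows that `α₁^{[ℓ]}` does not depend on `ℓ ≥ 2`,
and fixing `ℓ₂ = N` shows that `α₂^{[ℓ]}` does not depend on `ℓ < N` (the common products are
`1/2 ≠ 0`, so the other factor cancels). As `N > 2`, both ranges contain `ℓ = 2`, and the
first-order conditions carry the common values over to the two remaining indices `ℓ = 1` and
`ℓ = N`.
-/

namespace TwoStageSplitting

variable {K : Type*} [Field K] {a b : ℕ → K} {N : ℕ} {c : K}

theorem first_stage_eq (hc : c ≠ 0)
    (h2 : ∀ ℓ₁ ℓ₂, 1 ≤ ℓ₁ → ℓ₁ < ℓ₂ → ℓ₂ ≤ N → b ℓ₁ * a ℓ₂ = c)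
    (hN : 2 ≤ N) {ℓ : ℕ} (hℓ : 2 ≤ ℓ) (hℓN : ℓ ≤ N) : a ℓ = a 2 := by
  have h12 : b 1 * a 2 = c := h2 1 2 le_rfl one_lt_two hN
  have hb : b 1 ≠ 0 := left_ne_zero_of_mul (h12 ▸ hc)
  exact mul_left_cancel₀ hb ((h2 1 ℓ le_rfl hℓ hℓN).trans h12.symm)

theorem second_stage_eq (hc : c ≠ 0)
    (h2 : ∀ ℓ₁ ℓ₂, 1 ≤ ℓ₁ → ℓ₁ < ℓ₂ → ℓ₂ ≤ N → b ℓ₁ * a ℓ₂ = c)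
    (hN : 2 < N) {ℓ : ℕ} (hℓ : 1 ≤ ℓ) (hℓN : ℓ < N) : b ℓ = b 2 := by
  have h2N : b 2 * a N = c := h2 2 N one_le_two hN le_rfl
  have ha : a N ≠ 0 := right_ne_zero_of_mul (h2N ▸ hc)
  exact mul_right_cancel₀ ha ((h2 ℓ N hℓ hℓN le_rfl).trans h2N.symm)

theorem stages_eq (hc : c ≠ 0) (hN : 2 < N)
    (h1 : ∀ ℓ, 1 ≤ ℓ → ℓ ≤ N → a ℓ + b ℓ = 1)
    (h2 : ∀ ℓ₁ ℓ₂, 1 ≤ ℓ₁ → ℓ₁ < ℓ₂ → ℓ₂ ≤ N → b ℓ₁ * a ℓ₂ = c)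
    {ℓ : ℕ} (hℓ : 1 ≤ ℓ) (hℓN : ℓ ≤ N) : a ℓ = a 2 ∧ b ℓ = b 2 := by
  have hsum : a 2 + b 2 = 1 := h1 2 one_le_two hN.le
  constructor
  · rcases hℓ.eq_or_lt with rfl | hℓ
    · have hb : b 1 = b 2 := second_stage_eq hc h2 hN le_rfl (by omega)
      linear_combination h1 1 le_rfl (by omega) - hsum - hb
    · exact first_stage_eq hc h2 hN.le hℓ hℓN
  · rcases hℓN.eq_or_lt with rfl | hℓN
    · have ha : a ℓ = a 2 := first_stage_eq hc h2 hN.le hN.le le_rfl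
      linear_combination h1 ℓ hℓ le_rfl - hsum - ha
    · exact second_stage_eq hc h2 hN hℓ hℓN

end TwoStageSplitting

open TwoStageSplitting in
/-- If the two-stage order conditions for an `N`-split method with `N > 2` hold,
then all first-stage coefficients equal a common value `γ`, all second-stage
coefficients equal a common value `η`, and `γ + η = 1`, `γ·η = 1/2`. -/
theorem two_stage_coefficients_common_values (N : ℕ) (hN : 2 < N)
    (α : ℕ → ℕ → ℂ)
    (h1 : ∀ ℓ, 1 ≤ ℓ → ℓ ≤ N → α 1 ℓ + α 2 ℓ = 1)
    (h2 : ∀ ℓ₁ ℓ₂, 1 ≤ ℓ₁ → ℓ₁ < ℓ₂ → ℓ₂ ≤ N → α 2 ℓ₁ * α 1 ℓ₂ = 1 / 2) :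
    ∃ γ η : ℂ, (∀ ℓ, 1 ≤ ℓ → ℓ ≤ N → α 1 ℓ = γ ∧ α 2 ℓ = η) ∧
      γ + η = 1 ∧ γ * η = 1 / 2 := by
  have hc : (1 / 2 : ℂ) ≠ 0 := by norm_num
  have hb : α 2 1 = α 2 2 := (stages_eq hc hN h1 h2 le_rfl (by omega)).2
  refine ⟨α 1 2, α 2 2, fun ℓ hℓ hℓN => stages_eq hc hN h1 h2 hℓ hℓN,
    h1 2 one_le_two hN.le, ?_⟩
  rw [mul_comm, ← hb]
  exact h2 1 2 le_rfl one_lt_two hN.le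
end

section
/- Let p ≥ 2 be an integer and define the composition coefficients σ_{p,1} := 1/2 + i·sin(π/p)/(2 + 2cos(π/p)) and σ_{p,2} := conj(σ_{p,1}). Then: (i) σ_{p,1} + σ_{p,2} = 1; (ii) σ_{p,1}^p + σ_{p,2}^p = 0; (iii) the argument of σ_{p,1} equals π/(2p), and in particular σ_{p,1} and σ_{p,2} have positive real part 1/2. -/
/-!
With `θ = π / p`, the half-angle formulas give `σ₁ = e^{iθ/2} / (2 cos (θ/2))`, a positive
multiple of `e^{iπ/(2p)}`. Hence `arg σ₁ = π/(2p)`, and `σ₁ ^ p` is a real multiple of `i`, so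
`σ₁ ^ p + σ₂ ^ p = 2 Re (σ₁ ^ p) = 0`.
-/

open scoped ComplexConjugate

namespace Real

theorem sin_div_two_add_two_cos {x : ℝ} (hx : cos (x / 2) ≠ 0) :
    sin x / (2 + 2 * cos x) = sin (x / 2) / (2 * cos (x / 2)) := by
  have hx2 : x = 2 * (x / 2) := by ring
  rw [hx2, sin_two_mul, cos_two_mul, ← hx2]
  field_simp
  ring

end Real

namespace Complex

theorem half_add_I_mul_eq_ofReal_mul_cos_add_sin_mul_I {x : ℝ} (hx : Real.cos (x / 2) ≠ 0) :
    1 / 2 + I * ((Real.sin x / (2 + 2 * Real.cos x) : ℝ) : ℂ) =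
      ((2 * Real.cos (x / 2))⁻¹ : ℝ) * (cos (x / 2 : ℝ) + sin (x / 2 : ℝ) * I) := by
  rw [Real.sin_div_two_add_two_cos hx, ← ofReal_cos, ← ofReal_sin]
  generalize Real.cos (x / 2) = c at hx ⊢
  generalize Real.sin (x / 2) = s
  have hc : (c : ℂ) ≠ 0 := ofReal_ne_zero.mpr hx
  push_cast
  field_simp

theorem ofReal_mul_cos_add_sin_mul_I_pow_add_conj_pow (r : ℝ) {θ : ℝ} {n : ℕ}
    (h : n * θ = Real.pi / 2) :
    ((r : ℂ) * (cos θ + sin θ * I)) ^ n + conj ((r : ℂ) * (cos θ + sin θ * I)) ^ n = 0 := by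
  rw [← map_pow, add_conj, mul_pow, cos_add_sin_mul_I_pow, ← ofReal_pow, ← ofReal_natCast,
    ← ofReal_mul, h, re_ofReal_mul]
  simp

end Complex

/-- **Properties of the two-term composition coefficients** `σ_{p,1} =
1/2 + i·sin(π/p)/(2 + 2cos(π/p))`, `σ_{p,2} = conj σ_{p,1}` for `p ≥ 2`:
they sum to `1`, satisfy `σ_{p,1}^p + σ_{p,2}^p = 0`, `arg σ_{p,1} = π/(2p)`,
and both have positive real part equal to `1/2`. -/
theorem composition_coefficients_properties (p : ℕ) (hp : 2 ≤ p)
    (σ₁ σ₂ : ℂ)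
    (hσ₁ : σ₁ = 1 / 2 + Complex.I *
      ((Real.sin (Real.pi / p) / (2 + 2 * Real.cos (Real.pi / p)) : ℝ) : ℂ))
    (hσ₂ : σ₂ = conj σ₁) :
    σ₁ + σ₂ = 1 ∧ σ₁ ^ p + σ₂ ^ p = 0 ∧
      σ₁.arg = Real.pi / (2 * p) ∧
      σ₁.re = 1 / 2 ∧ σ₂.re = 1 / 2 ∧ 0 < σ₁.re ∧ 0 < σ₂.re := by
  have hp₀ : (0 : ℝ) < p := by positivity
  have hθ_pos : 0 < Real.pi / p / 2 := by positivity
  have hθ_lt : Real.pi / p / 2 < Real.pi / 2 := by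
    have : (2 : ℝ) ≤ p := by exact_mod_cast hp
    rw [div_lt_div_iff_of_pos_right two_pos, div_lt_iff₀ hp₀]
    nlinarith [Real.pi_pos]
  have hcos : 0 < Real.cos (Real.pi / p / 2) := Real.cos_pos_of_mem_Ioo ⟨by linarith, hθ_lt⟩
  have hpolar := hσ₁.trans (Complex.half_add_I_mul_eq_ofReal_mul_cos_add_sin_mul_I hcos.ne')
  have hre₁ : σ₁.re = 1 / 2 := by
    simp only [hσ₁, Complex.add_re, Complex.mul_re, Complex.I_re, Complex.I_im,
      Complex.ofReal_re, Complex.ofReal_im]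
    norm_num
  have hre₂ : σ₂.re = 1 / 2 := by rw [hσ₂, Complex.conj_re, hre₁]
  refine ⟨?_, ?_, ?_, hre₁, hre₂, by rw [hre₁]; norm_num, by rw [hre₂]; norm_num⟩
  · rw [hσ₂, Complex.add_conj, hre₁]
    norm_num
  · rw [hσ₂, hpolar]
    exact Complex.ofReal_mul_cos_add_sin_mul_I_pow_add_conj_pow _ (by field_simp)
  · rw [hpolar, Complex.arg_real_mul _ (by positivity),
      Complex.arg_cos_add_sin_mul_I ⟨by linarith [Real.pi_pos], by linarith⟩, div_div, mul_comm]
end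

section
/- Let a_1 = (1/4 − 1/(4√3)) + i·(1/4 + 1/(4√3)), a_2 = (1/4 + 1/(4√3)) + i·(−1/4 + 1/(4√3)), a_3 = (1/4 + 1/(4√3)) + i·(1/4 − 1/(4√3)), a_4 = (1/4 − 1/(4√3)) + i·(−1/4 − 1/(4√3)) be the stage coefficients of the CLT3 method. Then: (i) Re(a_k) > 0 for k = 1, 2, 3, 4; (ii) a_1 + a_2 + a_3 + a_4 = 1; (iii) Σ_{k=2}^{4} a_k·(Σ_{j=1}^{k−1} a_j) = 1/2. Hence the four-stage N-split method whose coefficients equal a_k in every operator satisfies the first- and second-order order conditions and has coefficients with positive real parts. -/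
/-!
The second-order sum is the elementary symmetric polynomial `e₂(a₁, …, a₄)`, and
`2 e₂ = (∑ aₖ)² - ∑ aₖ²`. The coefficients form two conjugate pairs, `a₁, a₄ = x ± i y`
and `a₃, a₂ = y ± i x` with `x = 1/4 - s`, `y = 1/4 + s`, so `∑ aₖ² = 2(x² - y²) + 2(y² - x²) = 0`
for every `s`. Hence both order conditions hold as soon as `∑ aₖ = 1`, and `s = 1/(4√3)` only
matters for the real parts, which are positive because `s < 1/4`.
-/

open Complex Finset

theorem two_mul_sum_range_mul_sum_range {R : Type*} [CommRing R] (a : ℕ → R) (n : ℕ) :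
    2 * ∑ k ∈ range n, a k * ∑ j ∈ range k, a j =
      (∑ k ∈ range n, a k) ^ 2 - ∑ k ∈ range n, a k ^ 2 := by
  induction n with
  | zero => simp
  | succ n ih => simp only [sum_range_succ, mul_add]; linear_combination ih

theorem clt3_sum_sq_eq_zero (u s : ℝ) :
    (((u - s : ℝ) : ℂ) + I * ((u + s : ℝ) : ℂ)) ^ 2 +
      (((u + s : ℝ) : ℂ) + I * ((-u + s : ℝ) : ℂ)) ^ 2 +
      (((u + s : ℝ) : ℂ) + I * ((u - s : ℝ) : ℂ)) ^ 2 +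
      (((u - s : ℝ) : ℂ) + I * ((-u - s : ℝ) : ℂ)) ^ 2 = 0 := by
  push_cast
  linear_combination (2 * ((u : ℂ) + s) ^ 2 + 2 * ((u : ℂ) - s) ^ 2) * I_sq

theorem one_div_four_mul_sqrt_three_lt : 1 / (4 * √3) < 1 / 4 := by
  have : 1 < √3 := Real.lt_sqrt_of_sq_lt (by norm_num)
  gcongr
  linarith

/-- **The CLT3 stage coefficients have positive real parts and satisfy the
first- and second-order order conditions**: `Re a_k > 0` for `k = 1,…,4`,
`a₁ + a₂ + a₃ + a₄ = 1`, and `∑_{k=2}^{4} a_k (∑_{j=1}^{k−1} a_j) = 1/2`. -/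
theorem CLT3_coefficients_order_conditions (a₁ a₂ a₃ a₄ : ℂ)
    (ha₁ : a₁ = ((1 / 4 - 1 / (4 * Real.sqrt 3) : ℝ) : ℂ) +
      Complex.I * ((1 / 4 + 1 / (4 * Real.sqrt 3) : ℝ) : ℂ))
    (ha₂ : a₂ = ((1 / 4 + 1 / (4 * Real.sqrt 3) : ℝ) : ℂ) +
      Complex.I * ((-(1 / 4) + 1 / (4 * Real.sqrt 3) : ℝ) : ℂ))
    (ha₃ : a₃ = ((1 / 4 + 1 / (4 * Real.sqrt 3) : ℝ) : ℂ) +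
      Complex.I * ((1 / 4 - 1 / (4 * Real.sqrt 3) : ℝ) : ℂ))
    (ha₄ : a₄ = ((1 / 4 - 1 / (4 * Real.sqrt 3) : ℝ) : ℂ) +
      Complex.I * ((-(1 / 4) - 1 / (4 * Real.sqrt 3) : ℝ) : ℂ)) :
    (0 < a₁.re ∧ 0 < a₂.re ∧ 0 < a₃.re ∧ 0 < a₄.re) ∧
      a₁ + a₂ + a₃ + a₄ = 1 ∧
      a₂ * a₁ + a₃ * (a₁ + a₂) + a₄ * (a₁ + a₂ + a₃) = 1 / 2 := by
  have h_re : 0 < a₁.re ∧ 0 < a₂.re ∧ 0 < a₃.re ∧ 0 < a₄.re := by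
    have hs_pos : 0 < 1 / (4 * √3) := by positivity
    have hs_lt := one_div_four_mul_sqrt_three_lt
    simp only [ha₁, ha₂, ha₃, ha₄, add_re, ofReal_re, I_mul_re, ofReal_im, neg_zero, add_zero]
    exact ⟨by linarith, by linarith, by linarith, by linarith⟩
  have h_sum : a₁ + a₂ + a₃ + a₄ = 1 := by
    subst ha₁ ha₂ ha₃ ha₄
    push_cast
    ring
  have h_sum_sq : a₁ ^ 2 + a₂ ^ 2 + a₃ ^ 2 + a₄ ^ 2 = 0 := by
    subst ha₁ ha₂ ha₃ ha₄
    exact clt3_sum_sq_eq_zero _ _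
  have h_e₂ := two_mul_sum_range_mul_sum_range ([a₁, a₂, a₃, a₄].getD · 0) 4
  simp only [sum_range_succ, sum_range_zero, List.getD_cons_succ, List.getD_cons_zero] at h_e₂
  refine ⟨h_re, h_sum, ?_⟩
  linear_combination h_e₂ / 2 + (a₁ + a₂ + a₃ + a₄ + 1) / 2 * h_sum - h_sum_sq / 2
end

section
/- Let A be a complex unital Banach algebra, let N ≥ 1, and let X_1, …, X_N ∈ A. Let σ_{3,1} = 1/2 + i·√3/6, σ_{3,2} = 1/2 − i·√3/6, γ = 1/2 + i/2, η = 1/2 − i/2, and let a_1 = σ_{3,1}γ, a_2 = σ_{3,1}η, a_3 = σ_{3,2}γ, a_4 = σ_{3,2}η. Define the CLT3 product P(t) := ∏_{k=1}^{4} ( exp(a_k t X_1)·exp(a_k t X_2) ⋯ exp(a_k t X_N) ), with factors multiplied left to right in increasing k. Then, as real t → 0, ‖P(t) − exp(t·(X_1 + ⋯ + X_N))‖ = O(|t|⁴); that is, the CLT3 method is third-order accurate for every N. -/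
/-!
Write `S = X₁ + ⋯ + X_N` and `L(z) = exp(zX₁)⋯exp(zX_N)`, which is analytic with `L(0) = 1` and
`L'(0) = S`. For any such `L` the cubic Taylor jet at `0` of `L(a₁z)L(a₂z)L(a₃z)L(a₄z)` is
`1 + zS + z²S²/2 + z³S³/6` as soon as `Σ aₖ = 1`, `Σ aₖ² = Σ aₖ³ = 0` and `Σ_{j<k} aⱼaₖ² = 0`,
whatever the higher coefficients of `L` are. The CLT3 coefficients satisfy these conditions,
being the products of the roots of `3σ² - 3σ + 1` with those of `2γ² - 2γ + 1`. Since
`Σ aₖ = 1`, `exp(zS)` is itself such a product for `L(z) = exp(zS)`, so `P` and `exp(·S)` have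
the same cubic jet and differ by `O(|z|⁴)`.
-/

open Asymptotics Filter Topology NormedSpace

section Composition

variable {R : Type*} [CommRing R]

structure IsThirdOrderComposition (a₁ a₂ a₃ a₄ : R) : Prop where
  sum_eq_one : a₁ + a₂ + a₃ + a₄ = 1
  sum_sq_eq_zero : a₁ ^ 2 + a₂ ^ 2 + a₃ ^ 2 + a₄ ^ 2 = 0
  sum_cube_eq_zero : a₁ ^ 3 + a₂ ^ 3 + a₃ ^ 3 + a₄ ^ 3 = 0
  sum_mul_sq_eq_zero : a₁ * (a₂ ^ 2 + a₃ ^ 2 + a₄ ^ 2) + a₂ * (a₃ ^ 2 + a₄ ^ 2) + a₃ * a₄ ^ 2 = 0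

theorem isThirdOrderComposition_mul_mul {σ₁ σ₂ γ η : R} (hσ : σ₁ + σ₂ = 1)
    (hσ' : 3 * (σ₁ * σ₂) = 1) (hγ : γ + η = 1) (hγ' : 2 * (γ * η) = 1) :
    IsThirdOrderComposition (σ₁ * γ) (σ₁ * η) (σ₂ * γ) (σ₂ * η) := by
  have hσ₃ : σ₁ ^ 3 + σ₂ ^ 3 = 0 := by
    linear_combination ((σ₁ + σ₂) ^ 2 + (σ₁ + σ₂)) * hσ - (σ₁ + σ₂) * hσ'
  have hγ₂ : γ ^ 2 + η ^ 2 = 0 := by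
    linear_combination (γ + η + 1) * hγ - hγ'
  exact
    { sum_eq_one := by linear_combination (γ + η) * hσ + hγ
      sum_sq_eq_zero := by linear_combination (σ₁ ^ 2 + σ₂ ^ 2) * hγ₂
      sum_cube_eq_zero := by linear_combination (γ ^ 3 + η ^ 3) * hσ₃
      sum_mul_sq_eq_zero := by
        linear_combination γ * η ^ 2 * hσ₃ + σ₁ * σ₂ ^ 2 * (γ + η) * hγ₂ }

end Composition

section CubicJet

variable {𝕜 : Type*} [NontriviallyNormedField 𝕜]

def HasCubicJet {E : Type*} [NormedAddCommGroup E] [NormedSpace 𝕜 E]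
    (f : 𝕜 → E) (b₀ b₁ b₂ b₃ : E) : Prop :=
  (fun z => f z - (b₀ + z • b₁ + z ^ 2 • b₂ + z ^ 3 • b₃)) =O[𝓝 0] fun z => ‖z‖ ^ 4

theorem isBigO_pow_smul_norm_pow {E : Type*} [NormedAddCommGroup E] [NormedSpace 𝕜 E]
    {n k : ℕ} (hnk : n ≤ k) (c : E) :
    (fun z : 𝕜 => z ^ k • c) =O[𝓝 0] fun z => ‖z‖ ^ n := by
  have hk : (fun z : 𝕜 => z ^ k • c) =O[𝓝 0] fun z => ‖z‖ ^ k :=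
    .of_bound ‖c‖ (.of_forall fun z => by simp [norm_smul, mul_comm])
  rcases hnk.eq_or_lt with rfl | hlt
  · exact hk
  · exact hk.trans (isLittleO_norm_pow_norm_pow hlt).isBigO

variable {A : Type*} [NormedRing A] [NormedAlgebra 𝕜 A]

theorem HasCubicJet.isBigO_one {f : 𝕜 → A} {b₀ b₁ b₂ b₃ : A} (h : HasCubicJet f b₀ b₁ b₂ b₃) :
    f =O[𝓝 0] fun _ => (1 : ℝ) := by
  have hpoly : (fun z : 𝕜 => b₀ + z • b₁ + z ^ 2 • b₂ + z ^ 3 • b₃) =O[𝓝 0] fun _ => (1 : ℝ) :=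
    (Continuous.tendsto (by fun_prop) 0).isBigO_one ℝ
  have hrem : (fun z : 𝕜 => ‖z‖ ^ 4) =O[𝓝 0] fun _ => (1 : ℝ) :=
    (Continuous.tendsto (by fun_prop) 0).isBigO_one ℝ
  simpa using (h.trans hrem).add hpoly

theorem HasCubicJet.mul {f g : 𝕜 → A} {b₀ b₁ b₂ b₃ c₀ c₁ c₂ c₃ : A}
    (hf : HasCubicJet f b₀ b₁ b₂ b₃) (hg : HasCubicJet g c₀ c₁ c₂ c₃) :
    HasCubicJet (fun z => f z * g z) (b₀ * c₀) (b₀ * c₁ + b₁ * c₀)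
      (b₀ * c₂ + b₁ * c₁ + b₂ * c₀) (b₀ * c₃ + b₁ * c₂ + b₂ * c₁ + b₃ * c₀) := by
  set P : 𝕜 → A := fun z => b₀ + z • b₁ + z ^ 2 • b₂ + z ^ 3 • b₃
  have hP : P =O[𝓝 0] fun _ => (1 : ℝ) := (Continuous.tendsto (by fun_prop) 0).isBigO_one ℝ
  have hfg : (fun z => (f z - P z) * g z) =O[𝓝 0] fun z => ‖z‖ ^ 4 := by
    simpa using IsBigO.mul hf hg.isBigO_one
  have hPg : (fun z => P z * (g z - (c₀ + z • c₁ + z ^ 2 • c₂ + z ^ 3 • c₃)))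
      =O[𝓝 0] fun z => ‖z‖ ^ 4 := by
    simpa using hP.mul hg
  have hhigh : (fun z : 𝕜 => z ^ 4 • (b₁ * c₃ + b₂ * c₂ + b₃ * c₁)
      + z ^ 5 • (b₂ * c₃ + b₃ * c₂) + z ^ 6 • (b₃ * c₃)) =O[𝓝 0] fun z => ‖z‖ ^ 4 :=
    ((isBigO_pow_smul_norm_pow le_rfl _).add (isBigO_pow_smul_norm_pow (by norm_num) _)).add
      (isBigO_pow_smul_norm_pow (by norm_num) _)
  refine ((hfg.add hPg).add hhigh).congr_left fun z => ?_
  simp only [P, sub_mul, mul_sub, add_mul, mul_add, smul_mul_assoc, mul_smul_comm]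
  module

theorem HasCubicJet.comp_const_mul {f : 𝕜 → A} {b₀ b₁ b₂ b₃ : A}
    (h : HasCubicJet f b₀ b₁ b₂ b₃) (α : 𝕜) :
    HasCubicJet (fun z => f (α * z)) b₀ (α • b₁) (α ^ 2 • b₂) (α ^ 3 • b₃) := by
  have hα : Tendsto (fun z : 𝕜 => α * z) (𝓝 0) (𝓝 0) := by
    simpa using (continuous_const_mul α).tendsto 0
  have hscale : (fun z : 𝕜 => ‖α * z‖ ^ 4) =O[𝓝 0] fun z => ‖z‖ ^ 4 := by
    simpa only [norm_mul, mul_pow] using (isBigO_refl (fun z : 𝕜 => ‖z‖ ^ 4) _).const_mul_left _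
  refine ((h.comp_tendsto hα).trans hscale).congr_left fun z => ?_
  simp only [Function.comp_apply, mul_pow, smul_smul]
  module

theorem HasCubicJet.isBigO_sub {f g : 𝕜 → A} {b₀ b₁ b₂ b₃ : A}
    (hf : HasCubicJet f b₀ b₁ b₂ b₃) (hg : HasCubicJet g b₀ b₁ b₂ b₃) :
    (fun z => f z - g z) =O[𝓝 0] fun z => ‖z‖ ^ 4 :=
  (hf.sub hg).congr_left fun z => by abel

theorem AnalyticAt.exists_hasCubicJet {f : 𝕜 → A} {b : A} (hf : AnalyticAt 𝕜 f 0)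
    (hf' : HasDerivAt f b 0) : ∃ b₂ b₃, HasCubicJet f (f 0) b b₂ b₃ := by
  obtain ⟨p, hp⟩ := hf
  have hb₀ : p.coeff 0 = f 0 := hp.coeff_zero _
  have hb₁ : p.coeff 1 = b := hp.hasDerivAt.unique hf'
  refine ⟨p.coeff 2, p.coeff 3, ?_⟩
  refine (hp.isBigO_sub_partialSum_pow 4).congr_left fun z => ?_
  simp [FormalMultilinearSeries.partialSum, Finset.sum_range_succ, ← hb₀, ← hb₁]

variable [CharZero 𝕜] in
theorem HasCubicJet.comp_mul_four {L : 𝕜 → A} {S l₂ l₃ : A} (hL : HasCubicJet L 1 S l₂ l₃)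
    {a₁ a₂ a₃ a₄ : 𝕜} (ha : IsThirdOrderComposition a₁ a₂ a₃ a₄) :
    HasCubicJet (fun z => L (a₁ * z) * (L (a₂ * z) * (L (a₃ * z) * L (a₄ * z)))) 1 S
      ((2 : 𝕜)⁻¹ • (S * S)) ((6 : 𝕜)⁻¹ • (S * (S * S))) := by
  obtain ⟨h₁, h₂, h₃, h₄⟩ := ha
  convert (hL.comp_const_mul a₁).mul
    ((hL.comp_const_mul a₂).mul ((hL.comp_const_mul a₃).mul (hL.comp_const_mul a₄))) using 1
  · simp
  all_goals
    simp only [mul_add, one_mul, mul_one, smul_mul_assoc, mul_smul_comm, smul_smul, mul_assoc]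
    match_scalars
  -- the coefficients of `l₂`, `l₃`, `S * l₂` and `l₂ * S` vanish by the order conditions
  · linear_combination -h₁
  · linear_combination -(a₁ + a₂ + a₃ + a₄ + 1) / 2 * h₁ + 1 / 2 * h₂
  · linear_combination -h₂
  · linear_combination -((a₁ + a₂ + a₃ + a₄) ^ 2 + (a₁ + a₂ + a₃ + a₄) + 1) / 6 * h₁
      + (a₁ + a₂ + a₃ + a₄) / 2 * h₂ - 1 / 3 * h₃
  · linear_combination -h₃
  · linear_combination -h₄
  · linear_combination -(a₁ + a₂ + a₃ + a₄) * h₂ + h₃ + h₄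

end CubicJet

section Exponential

variable {𝕂 : Type*} [RCLike 𝕂] {A : Type*} [NormedRing A] [NormedAlgebra 𝕂 A] [CompleteSpace A]

theorem analyticAt_exp_smul (Y : A) (z : 𝕂) : AnalyticAt 𝕂 (fun w : 𝕂 => exp (w • Y)) z :=
  AnalyticAt.comp (g := exp) (f := fun w : 𝕂 => w • Y) (exp_analytic _)
    (analyticAt_id.smul analyticAt_const)

theorem analyticAt_list_prod_exp_smul (l : List A) (z : 𝕂) :
    AnalyticAt 𝕂 (fun w : 𝕂 => (l.map fun Y => exp (w • Y)).prod) z := by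
  induction l with
  | nil => simpa using analyticAt_const
  | cons Y l ih =>
    simp only [List.map_cons, List.prod_cons]
    exact (analyticAt_exp_smul Y z).mul ih

theorem hasDerivAt_list_prod_exp_smul (l : List A) :
    HasDerivAt (fun w : 𝕂 => (l.map fun Y => exp (w • Y)).prod) l.sum 0 := by
  induction l with
  | nil => simpa using hasDerivAt_const (0 : 𝕂) (1 : A)
  | cons Y l ih =>
    simp only [List.map_cons, List.prod_cons]
    convert (hasDerivAt_exp_smul_const' Y (0 : 𝕂)).fun_mul ih using 1
    simp

theorem exp_smul_eq_mul_four {a₁ a₂ a₃ a₄ : 𝕂} (ha : a₁ + a₂ + a₃ + a₄ = 1) (S : A) (z : 𝕂) :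
    exp (z • S) =
      exp ((a₁ * z) • S) * (exp ((a₂ * z) • S) * (exp ((a₃ * z) • S) * exp ((a₄ * z) • S))) := by
  let _ : NormedAlgebra ℚ A := NormedAlgebra.restrictScalars ℚ 𝕂 A
  have hc (b c : 𝕂) : Commute (b • S) (c • S) := ((Commute.refl S).smul_left b).smul_right c
  rw [← exp_add_of_commute (hc _ _), ← add_smul, ← exp_add_of_commute (hc _ _), ← add_smul,
    ← exp_add_of_commute (hc _ _), ← add_smul]
  congr 2
  linear_combination -z * ha

end Exponential

theorem Finset.sum_Icc_one_eq_sum_map_range {M : Type*} [AddCommMonoid M] (N : ℕ) (X : ℕ → M) :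
    ∑ ℓ ∈ Finset.Icc 1 N, X ℓ = ((List.range N).map fun ℓ => X (ℓ + 1)).sum := by
  induction N with
  | zero => simp
  | succ N ih => rw [Finset.sum_Icc_succ_top (by omega), ih, List.range_succ]; simp

theorem CLT3_third_order_general {A : Type*} [NormedRing A] [NormedAlgebra ℂ A]
    [CompleteSpace A] (N : ℕ) (X : ℕ → A) (a : ℕ → ℂ)
    (ha₁ : a 1 = (1 / 2 + Complex.I * ((Real.sqrt 3 : ℝ) : ℂ) / 6) *
      (1 / 2 + Complex.I / 2))
    (ha₂ : a 2 = (1 / 2 + Complex.I * ((Real.sqrt 3 : ℝ) : ℂ) / 6) *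
      (1 / 2 - Complex.I / 2))
    (ha₃ : a 3 = (1 / 2 - Complex.I * ((Real.sqrt 3 : ℝ) : ℂ) / 6) *
      (1 / 2 + Complex.I / 2))
    (ha₄ : a 4 = (1 / 2 - Complex.I * ((Real.sqrt 3 : ℝ) : ℂ) / 6) *
      (1 / 2 - Complex.I / 2)) :
    (fun t : ℝ =>
        ((List.range 4).map (fun k =>
            ((List.range N).map (fun ℓ =>
                NormedSpace.exp ((a (k + 1) * (t : ℂ)) • X (ℓ + 1)))).prod)).prod -
          NormedSpace.exp ((t : ℂ) • ∑ ℓ ∈ Finset.Icc 1 N, X ℓ))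
      =O[nhds (0 : ℝ)] fun t : ℝ => |t| ^ 4 := by
  set xs : List A := (List.range N).map fun ℓ => X (ℓ + 1)
  have ha : IsThirdOrderComposition (a 1) (a 2) (a 3) (a 4) := by
    have h3 : ((Real.sqrt 3 : ℝ) : ℂ) ^ 2 = 3 := by
      rw [← Complex.ofReal_pow, Real.sq_sqrt (by norm_num)]; norm_num
    rw [ha₁, ha₂, ha₃, ha₄]
    exact isThirdOrderComposition_mul_mul (by ring)
      (by linear_combination -(((Real.sqrt 3 : ℝ) : ℂ) ^ 2 / 12) * Complex.I_sq + h3 / 12)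
      (by ring) (by linear_combination -(1 / 2 : ℂ) * Complex.I_sq)
  obtain ⟨l₂, l₃, hL⟩ := (analyticAt_list_prod_exp_smul xs (0 : ℂ)).exists_hasCubicJet
    (hasDerivAt_list_prod_exp_smul xs)
  obtain ⟨e₂, e₃, hE⟩ := (analyticAt_exp_smul xs.sum (0 : ℂ)).exists_hasCubicJet
    (by simpa using hasDerivAt_exp_smul_const' xs.sum (0 : ℂ))
  simp only [zero_smul, exp_zero, List.map_const', List.prod_replicate, one_pow] at hL hE
  have hP := (hL.comp_mul_four ha).isBigO_sub (hE.comp_mul_four ha)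
  have hofReal : Tendsto (fun t : ℝ => (t : ℂ)) (𝓝 0) (𝓝 0) :=
    Complex.continuous_ofReal.tendsto' 0 0 Complex.ofReal_zero
  refine (hP.comp_tendsto hofReal).congr (fun t => ?_) (fun t => by simp)
  rw [Finset.sum_Icc_one_eq_sum_map_range, exp_smul_eq_mul_four ha.sum_eq_one]
  simp [xs, List.range_succ, Function.comp_def]

/-- **The CLT3 method is third-order accurate for every `N`.**  With stage
coefficients `a₁ = σ_{3,1}γ`, `a₂ = σ_{3,1}η`, `a₃ = σ_{3,2}γ`, `a₄ = σ_{3,2}η`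
(where `σ_{3,1} = 1/2 + i√3/6`, `σ_{3,2} = 1/2 − i√3/6`, `γ = 1/2 + i/2`,
`η = 1/2 − i/2`) and
`P(t) = ∏_{k=1}^{4} (exp(a_k t X₁)⋯exp(a_k t X_N))`, as real `t → 0`,
`‖P(t) − exp(t(X₁ + ⋯ + X_N))‖ = O(|t|⁴)`. -/
theorem CLT3_third_order {A : Type*} [NormedRing A] [NormedAlgebra ℂ A]
    [CompleteSpace A] (N : ℕ) (hN : 1 ≤ N) (X : ℕ → A) (a : ℕ → ℂ)
    (ha₁ : a 1 = (1 / 2 + Complex.I * ((Real.sqrt 3 : ℝ) : ℂ) / 6) *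
      (1 / 2 + Complex.I / 2))
    (ha₂ : a 2 = (1 / 2 + Complex.I * ((Real.sqrt 3 : ℝ) : ℂ) / 6) *
      (1 / 2 - Complex.I / 2))
    (ha₃ : a 3 = (1 / 2 - Complex.I * ((Real.sqrt 3 : ℝ) : ℂ) / 6) *
      (1 / 2 + Complex.I / 2))
    (ha₄ : a 4 = (1 / 2 - Complex.I * ((Real.sqrt 3 : ℝ) : ℂ) / 6) *
      (1 / 2 - Complex.I / 2)) :
    (fun t : ℝ =>
        ((List.range 4).map (fun k =>
            ((List.range N).map (fun ℓ =>
                NormedSpace.exp ((a (k + 1) * (t : ℂ)) • X (ℓ + 1)))).prod)).prod -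
          NormedSpace.exp ((t : ℂ) • ∑ ℓ ∈ Finset.Icc 1 N, X ℓ))
      =O[nhds (0 : ℝ)] fun t : ℝ => |t| ^ 4 :=
  CLT3_third_order_general N X a ha₁ ha₂ ha₃ ha₄
end

section
/- Let A be a complex unital Banach algebra, let N ≥ 1, and let X_1, …, X_N ∈ A. Let σ_{3,1} = 1/2 + i·√3/6 and σ_{3,2} = 1/2 − i·√3/6. For σ ∈ ℂ define the scaled Strang product S(σ, t) := exp((σt/2)X_1) ⋯ exp((σt/2)X_{N−1}) · exp(σt X_N) · exp((σt/2)X_{N−1}) ⋯ exp((σt/2)X_1). Define the complex Strang composition P(t) := S(σ_{3,1}, t) · S(σ_{3,2}, t). Then, as real t → 0, ‖P(t) − exp(t·(X_1 + ⋯ + X_N))‖ = O(|t|⁴); that is, the third-order complex method C-Strang-3 obtained from the two-term composition of the N-split Strang method is third-order accurate for every N. -/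
/-!
Work with third-order jets at `0` of functions `𝕜 → A`. A product of exponentials `exp (c u Y)`
has jet `1 + u (∑ c Y) + O(u²)`, and the Strang product `T` satisfies `T u * T (-u) = 1`;
comparing jets of that identity forces the second coefficient of `T` to be `S² / 2`, where
`S = X₁ + ⋯ + X_N`. In `T (σ₁ u) * T (σ₂ u)` with `σ₁ + σ₂ = 1` and `σ₁ σ₂ = 1/3` the unknown
cubic coefficient of `T` enters with the factor `σ₁³ + σ₂³ = 1 - 3 σ₁ σ₂ = 0`, and the remaining
coefficients are those of `exp (u S)`.
-/

open Filter Asymptotics NormedSpace Topology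

namespace CStrang3

lemma sum_range_pred_add_eq_sum_Icc {M : Type*} [AddCommMonoid M] (X : ℕ → M) {N : ℕ}
    (hN : 1 ≤ N) :
    ((List.range (N - 1)).map fun ℓ => X (ℓ + 1)).sum + X N = ∑ ℓ ∈ Finset.Icc 1 N, X ℓ := by
  obtain ⟨n, rfl⟩ := Nat.exists_eq_add_of_le' hN
  rw [Nat.add_sub_cancel, ← Finset.Ico_add_one_right_eq_Icc, ← Finset.sum_Ico_add' X 0 (n + 1) 1,
    ← Finset.range_eq_Ico, Finset.sum_range_succ]
  rfl

lemma prod_map_mul_prod_reverse_map_eq_one {ι M : Type*} [Monoid M] (l : List ι) (f g : ι → M)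
    (h : ∀ i, f i * g i = 1) : (l.map f).prod * (l.reverse.map g).prod = 1 := by
  induction l with
  | nil => simp
  | cons i l ih =>
    calc (((i :: l).map f).prod * ((i :: l).reverse.map g).prod)
        = f i * ((l.map f).prod * (l.reverse.map g).prod) * g i := by simp [mul_assoc]
      _ = 1 := by rw [ih, mul_one, h]

section Expansion

variable {𝕜 A : Type*} [NontriviallyNormedField 𝕜] [NormedRing A] [NormedAlgebra 𝕜 A]

def cubic (a₀ a₁ a₂ a₃ : A) (u : 𝕜) : A :=
  a₀ + u • a₁ + u ^ 2 • a₂ + u ^ 3 • a₃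

@[fun_prop]
lemma continuous_cubic (a₀ a₁ a₂ a₃ : A) : Continuous (cubic (𝕜 := 𝕜) a₀ a₁ a₂ a₃) := by
  unfold cubic
  fun_prop

def HasCubicExpansion (f : 𝕜 → A) (a₀ a₁ a₂ a₃ : A) : Prop :=
  (fun u => f u - cubic a₀ a₁ a₂ a₃ u) =O[𝓝 0] fun u => ‖u‖ ^ 4

lemma eq_zero_of_pow_smul_isBigO {n : ℕ} {d : A}
    (h : (fun u : 𝕜 => u ^ n • d) =O[𝓝 0] fun u => ‖u‖ ^ (n + 1)) : d = 0 := by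
  have hp : (fun u : 𝕜 => ContinuousMultilinearMap.mkPiRing 𝕜 (Fin n) d fun _ => u)
      = fun u => u ^ n • d := by
    ext u
    simp [ContinuousMultilinearMap.mkPiRing_apply]
  have h₁ := (hp ▸ h).continuousMultilinearMap_apply_eq_zero 1
  rwa [ContinuousMultilinearMap.mkPiRing_apply, Finset.prod_const_one, one_smul] at h₁

lemma hasCubicExpansion_const (a : A) : HasCubicExpansion (fun _ : 𝕜 => a) a 0 0 0 := by
  simpa [HasCubicExpansion, cubic] using isBigO_zero _ _

namespace HasCubicExpansion

variable {f g : 𝕜 → A} {a₀ a₁ a₂ a₃ b₀ b₁ b₂ b₃ : A}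

lemma congr (hf : HasCubicExpansion f a₀ a₁ a₂ a₃) (h : ∀ u, f u = g u) :
    HasCubicExpansion g a₀ a₁ a₂ a₃ :=
  IsBigO.congr_left hf fun u => by rw [h u]

lemma isBigO_one (hf : HasCubicExpansion f a₀ a₁ a₂ a₃) : f =O[𝓝 0] fun _ => (1 : ℝ) := by
  have h₄ : (fun u : 𝕜 => ‖u‖ ^ 4) =O[𝓝 0] fun _ => (1 : ℝ) :=
    ((by fun_prop : Continuous fun u : 𝕜 => ‖u‖ ^ 4).tendsto 0).isBigO_one ℝ
  simpa using (IsBigO.trans hf h₄).add (((continuous_cubic a₀ a₁ a₂ a₃).tendsto 0).isBigO_one ℝ)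

lemma isBigO_sub (hf : HasCubicExpansion f a₀ a₁ a₂ a₃) (hg : HasCubicExpansion g a₀ a₁ a₂ a₃) :
    (fun u => f u - g u) =O[𝓝 0] fun u => ‖u‖ ^ 4 :=
  (IsBigO.sub hf hg).congr_left fun _ => sub_sub_sub_cancel_right _ _ _

lemma comp_mul_left (hf : HasCubicExpansion f a₀ a₁ a₂ a₃) (c : 𝕜) :
    HasCubicExpansion (fun u => f (c * u)) a₀ (c • a₁) (c ^ 2 • a₂) (c ^ 3 • a₃) := by
  have hc : Tendsto (fun u : 𝕜 => c * u) (𝓝 0) (𝓝 0) := by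
    simpa using ((continuous_const_mul c).tendsto 0)
  have hnorm : (fun u : 𝕜 => ‖c * u‖ ^ 4) =O[𝓝 0] fun u => ‖u‖ ^ 4 :=
    IsBigO.of_bound (‖c‖ ^ 4) (Eventually.of_forall fun u => by simp [mul_pow])
  refine ((IsBigO.comp_tendsto hf hc).trans hnorm).congr_left fun u => ?_
  simp only [Function.comp, cubic, mul_pow, smul_smul]
  ring_nf

lemma mul (hf : HasCubicExpansion f a₀ a₁ a₂ a₃) (hg : HasCubicExpansion g b₀ b₁ b₂ b₃) :
    HasCubicExpansion (fun u => f u * g u) (a₀ * b₀) (a₀ * b₁ + a₁ * b₀)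
      (a₀ * b₂ + a₁ * b₁ + a₂ * b₀) (a₀ * b₃ + a₁ * b₂ + a₂ * b₁ + a₃ * b₀) := by
  set r : 𝕜 → A := fun u =>
    (a₁ * b₃ + a₂ * b₂ + a₃ * b₁) + u • (a₂ * b₃ + a₃ * b₂) + u ^ 2 • (a₃ * b₃) with hr_def
  have hprod : ∀ u : 𝕜, cubic a₀ a₁ a₂ a₃ u * cubic b₀ b₁ b₂ b₃ u
      = cubic (a₀ * b₀) (a₀ * b₁ + a₁ * b₀) (a₀ * b₂ + a₁ * b₁ + a₂ * b₀)
          (a₀ * b₃ + a₁ * b₂ + a₂ * b₁ + a₃ * b₀) u + u ^ 4 • r u := by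
    intro u
    simp only [hr_def, cubic, mul_add, add_mul, smul_mul_assoc, mul_smul_comm, smul_smul, smul_add]
    module
  have hrem : (fun u => u ^ 4 • r u) =O[𝓝 (0 : 𝕜)] fun u => ‖u‖ ^ 4 := by
    have hr₁ : r =O[𝓝 0] fun _ => (1 : ℝ) :=
      ((by fun_prop : Continuous r).tendsto 0).isBigO_one ℝ
    refine ((isBigO_refl (fun u : 𝕜 => u ^ 4) _).norm_right.smul hr₁).congr_right fun u => ?_
    rw [smul_eq_mul, mul_one, norm_pow]
  have hf' : (fun u => (f u - cubic a₀ a₁ a₂ a₃ u) * g u) =O[𝓝 0] fun u => ‖u‖ ^ 4 := by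
    simpa only [mul_one] using IsBigO.mul hf hg.isBigO_one
  have hg' : (fun u => cubic a₀ a₁ a₂ a₃ u * (g u - cubic b₀ b₁ b₂ b₃ u))
      =O[𝓝 0] fun u => ‖u‖ ^ 4 := by
    simpa only [one_mul] using
      (((continuous_cubic a₀ a₁ a₂ a₃).tendsto 0).isBigO_one ℝ).mul hg
  refine ((hf'.add hg').add hrem).congr_left fun u => ?_
  simp only [sub_mul, mul_sub]
  rw [hprod u]
  abel

lemma coeff_two_eq (hf : HasCubicExpansion f a₀ a₁ a₂ a₃) (hg : HasCubicExpansion f a₀ a₁ b₂ b₃) :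
    a₂ = b₂ := by
  have hdiff : (fun u : 𝕜 => u ^ 2 • (b₂ - a₂) + u ^ 3 • (b₃ - a₃)) =O[𝓝 0] fun u => ‖u‖ ^ 3 := by
    refine ((IsBigO.sub hf hg).trans
      (isLittleO_norm_pow_norm_pow (by norm_num : 3 < 4)).isBigO).congr_left fun u => ?_
    simp only [cubic, smul_sub]
    abel
  have hcube : (fun u : 𝕜 => u ^ 3 • (b₃ - a₃)) =O[𝓝 0] fun u => ‖u‖ ^ 3 :=
    IsBigO.of_bound ‖b₃ - a₃‖ (Eventually.of_forall fun u => by simp [norm_smul, mul_comm])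
  exact (sub_eq_zero.mp (eq_zero_of_pow_smul_isBigO
    ((hdiff.sub hcube).congr_left fun _ => add_sub_cancel_right _ _))).symm

lemma two_smul_coeff_two_eq_sq_of_mul_neg_eq_one (hf : HasCubicExpansion f 1 a₁ a₂ a₃)
    (h : ∀ u, f u * f (-u) = 1) : (2 : 𝕜) • a₂ = a₁ ^ 2 := by
  have hprod : HasCubicExpansion (fun _ : 𝕜 => (1 : A)) 1 0 ((2 : 𝕜) • a₂ - a₁ ^ 2)
      (a₁ * a₂ - a₂ * a₁) := by
    convert (hf.mul (hf.comp_mul_left (-1))).congr fun u => (by simpa using h u) using 1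
    all_goals simp only [one_mul, mul_one, even_two.neg_one_pow, one_smul,
      (by decide : Odd 3).neg_one_pow, neg_smul, mul_neg, two_smul, sq]
    all_goals abel
  exact sub_eq_zero.mp (hprod.coeff_two_eq (hasCubicExpansion_const 1))

end HasCubicExpansion

end Expansion

section Strang

variable {𝕜 A : Type*} [RCLike 𝕜] [NormedRing A] [NormedAlgebra 𝕜 A]

lemma HasCubicExpansion.comp_mul_mul_comp_mul {f : 𝕜 → A} {S a₃ : A}
    (hf : HasCubicExpansion f 1 S ((2 : 𝕜)⁻¹ • S ^ 2) a₃) {σ₁ σ₂ : 𝕜}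
    (h₁ : σ₁ + σ₂ = 1) (h₂ : σ₁ * σ₂ = 3⁻¹) :
    HasCubicExpansion (fun u => f (σ₁ * u) * f (σ₂ * u)) 1 S ((2 : 𝕜)⁻¹ • S ^ 2)
      ((6 : 𝕜)⁻¹ • S ^ 3) := by
  obtain rfl : σ₂ = 1 - σ₁ := eq_sub_of_add_eq' h₁
  convert (hf.comp_mul_left σ₁).mul (hf.comp_mul_left (1 - σ₁)) using 1
  · simp
  all_goals simp only [one_mul, mul_one, smul_smul, smul_mul_assoc, mul_smul_comm, ← sq,
    ← pow_succ, ← pow_succ']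
  · module
  · match_scalars
    ring
  · match_scalars
    · linear_combination (-1 / 2 : 𝕜) * h₂
    · linear_combination 3 * h₂

/-- `strang [X₁, …, X_{N-1}] X_N (σ * t)` is the scaled Strang product `S(σ, t)`. -/
noncomputable def strang (l : List A) (Z : A) (u : 𝕜) : A :=
  (l.map fun Y => exp ((2⁻¹ * u) • Y)).prod * exp (u • Z) *
    (l.reverse.map fun Y => exp ((2⁻¹ * u) • Y)).prod

variable [CompleteSpace A]

lemma hasCubicExpansion_exp_smul (Y : A) :
    HasCubicExpansion (fun u : 𝕜 => exp (u • Y)) 1 Y ((2 : 𝕜)⁻¹ • Y ^ 2) ((6 : 𝕜)⁻¹ • Y ^ 3) := by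
  have hexp := (exp_hasFPowerSeriesAt_zero (𝕂 := 𝕜) (𝔸 := A)).isBigO_sub_partialSum_pow 4
  have hY : Tendsto (fun u : 𝕜 => u • Y) (𝓝 0) (𝓝 0) := by
    simpa using (by fun_prop : Continuous fun u : 𝕜 => u • Y).tendsto 0
  have hnorm : (fun u : 𝕜 => ‖u • Y‖ ^ 4) =O[𝓝 0] fun u => ‖u‖ ^ 4 :=
    IsBigO.of_bound (‖Y‖ ^ 4) (Eventually.of_forall fun u => by simp [norm_smul, mul_pow, mul_comm])
  refine ((hexp.comp_tendsto hY).trans hnorm).congr_left fun u => ?_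
  simp [FormalMultilinearSeries.partialSum, Finset.sum_range_succ, expSeries_apply_eq, smul_pow,
    cubic, smul_smul, Nat.factorial, mul_comm]

lemma hasCubicExpansion_list_prod_exp (c : 𝕜) (l : List A) :
    ∃ a₂ a₃ : A, HasCubicExpansion (fun u : 𝕜 => (l.map fun Y => exp ((c * u) • Y)).prod)
      1 (c • l.sum) a₂ a₃ := by
  induction l with
  | nil => exact ⟨0, 0, by simpa using hasCubicExpansion_const (𝕜 := 𝕜) (1 : A)⟩
  | cons Y l ih =>
    obtain ⟨a₂, a₃, hl⟩ := ih
    have hY := (hasCubicExpansion_exp_smul (𝕜 := 𝕜) Y).comp_mul_left c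
    exact ⟨_, _, by convert hY.mul hl using 1 <;> simp [smul_add, add_comm]⟩

lemma strang_mul_strang_neg (l : List A) (Z : A) (u : 𝕜) : strang l Z u * strang l Z (-u) = 1 := by
  let _ : NormedAlgebra ℚ A := .restrictScalars ℚ 𝕜 A
  have exp_mul_exp_neg (x : A) : exp x * exp (-x) = 1 := by
    rw [← exp_add_of_commute (Commute.refl x).neg_right, add_neg_cancel, exp_zero]
  have hY (Y : A) : exp ((2⁻¹ * u) • Y) * exp ((2⁻¹ * -u) • Y) = 1 := by
    rw [mul_neg, neg_smul, exp_mul_exp_neg]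
  have hl := prod_map_mul_prod_reverse_map_eq_one l _ _ hY
  have hr := prod_map_mul_prod_reverse_map_eq_one l.reverse _ _ hY
  rw [List.reverse_reverse] at hr
  calc strang l Z u * strang l Z (-u)
      = (l.map fun Y => exp ((2⁻¹ * u) • Y)).prod * (exp (u • Z) *
          ((l.reverse.map fun Y => exp ((2⁻¹ * u) • Y)).prod *
            (l.map fun Y => exp ((2⁻¹ * -u) • Y)).prod) * exp (-u • Z)) *
          (l.reverse.map fun Y => exp ((2⁻¹ * -u) • Y)).prod := by
        simp only [strang, mul_assoc]
    _ = 1 := by rw [hr, mul_one, neg_smul, exp_mul_exp_neg, mul_one, hl]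

lemma hasCubicExpansion_strang (l : List A) (Z : A) :
    ∃ a₃ : A, HasCubicExpansion (strang (𝕜 := 𝕜) l Z) 1 (l.sum + Z)
      ((2 : 𝕜)⁻¹ • (l.sum + Z) ^ 2) a₃ := by
  obtain ⟨a₂, a₃, hl⟩ := hasCubicExpansion_list_prod_exp (2⁻¹ : 𝕜) l
  obtain ⟨b₂, b₃, hr⟩ := hasCubicExpansion_list_prod_exp (2⁻¹ : 𝕜) l.reverse
  obtain ⟨c₂, c₃, h⟩ : ∃ c₂ c₃ : A, HasCubicExpansion (strang (𝕜 := 𝕜) l Z) 1 (l.sum + Z) c₂ c₃ :=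
    ⟨_, _, by
      convert (hl.mul (hasCubicExpansion_exp_smul (𝕜 := 𝕜) Z)).mul hr using 1
      · ext u
        simp [strang]
      · simp
      · simp only [List.sum_reverse, mul_one, one_mul]
        module⟩
  have h₂ := h.two_smul_coeff_two_eq_sq_of_mul_neg_eq_one (strang_mul_strang_neg l Z)
  exact ⟨c₃, by rwa [← h₂, inv_smul_smul₀ two_ne_zero]⟩

end Strang

section Complex

variable {A : Type*} [NormedRing A] [NormedAlgebra ℂ A] [CompleteSpace A]

lemma strang_mul_strang_sub_exp_isBigO (l : List A) (Z : A) :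
    (fun u : ℂ => strang l Z ((1 / 2 + Complex.I * ((Real.sqrt 3 : ℝ) : ℂ) / 6) * u) *
        strang l Z ((1 / 2 - Complex.I * ((Real.sqrt 3 : ℝ) : ℂ) / 6) * u) -
        exp (u • (l.sum + Z))) =O[𝓝 0] fun u => ‖u‖ ^ 4 := by
  have hsqrt : ((Real.sqrt 3 : ℝ) : ℂ) ^ 2 = 3 := by
    rw [← Complex.ofReal_pow, Real.sq_sqrt (by norm_num : (0 : ℝ) ≤ 3)]
    norm_num
  obtain ⟨a₃, h⟩ := hasCubicExpansion_strang (𝕜 := ℂ) l Z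
  exact (h.comp_mul_mul_comp_mul (by ring)
    (by linear_combination (-1 / 36 : ℂ) * ((Real.sqrt 3 : ℝ) : ℂ) ^ 2 * Complex.I_sq
      + (1 / 36 : ℂ) * hsqrt)).isBigO_sub (hasCubicExpansion_exp_smul _)

end Complex

end CStrang3

open CStrang3 in
/-- **The C-Strang-3 method is third-order accurate for every `N`.**
With `σ_{3,1} = 1/2 + i√3/6`, `σ_{3,2} = 1/2 − i√3/6` and the scaled Strang
product `S(σ,t) = exp((σt/2)X₁)⋯exp((σt/2)X_{N−1})·exp(σtX_N)·
exp((σt/2)X_{N−1})⋯exp((σt/2)X₁)`, the composition `P(t) = S(σ_{3,1},t)·S(σ_{3,2},t)`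
satisfies `‖P(t) − exp(t(X₁ + ⋯ + X_N))‖ = O(|t|⁴)` as real `t → 0`. -/
theorem CStrang3_third_order {A : Type*} [NormedRing A] [NormedAlgebra ℂ A]
    [CompleteSpace A] (N : ℕ) (hN : 1 ≤ N) (X : ℕ → A)
    (S : ℂ → ℝ → A)
    (hS : ∀ (σ : ℂ) (t : ℝ),
      S σ t = ((List.range (N - 1)).map (fun ℓ =>
          NormedSpace.exp ((σ * (t : ℂ) / 2) • X (ℓ + 1)))).prod *
        NormedSpace.exp ((σ * (t : ℂ)) • X N) *
        (((List.range (N - 1)).map (fun ℓ =>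
          NormedSpace.exp ((σ * (t : ℂ) / 2) • X (ℓ + 1)))).reverse).prod) :
    (fun t : ℝ =>
        S (1 / 2 + Complex.I * ((Real.sqrt 3 : ℝ) : ℂ) / 6) t *
          S (1 / 2 - Complex.I * ((Real.sqrt 3 : ℝ) : ℂ) / 6) t -
          NormedSpace.exp ((t : ℂ) • ∑ ℓ ∈ Finset.Icc 1 N, X ℓ))
      =O[nhds (0 : ℝ)] fun t : ℝ => |t| ^ 4 := by
  set l := (List.range (N - 1)).map fun ℓ => X (ℓ + 1)
  have hS' (σ : ℂ) (t : ℝ) : S σ t = strang l (X N) (σ * t) := by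
    simp [hS, strang, l, List.map_map, Function.comp_def, div_eq_inv_mul]
  have hofReal : Tendsto (fun t : ℝ => (t : ℂ)) (𝓝 0) (𝓝 0) := by
    simpa using Complex.continuous_ofReal.tendsto 0
  refine (((strang_mul_strang_sub_exp_isBigO l (X N)).comp_tendsto hofReal).congr_left
    fun t => ?_).congr_right fun t => ?_
  · rw [Function.comp_apply, hS', hS', ← sum_range_pred_add_eq_sum_Icc X hN]
  · simp
end
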